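/- arXiv:math/0109142 — 9 statements merged into one kernel-verified Lean document; each statement's English description precedes it below -/
import Mathlib

section
/- Let E be a directed graph and X ⊆ E⁰. Define inductively Σ₀(X) := X ∪ {w ∈ E⁰ : there is a path from a vertex in X to w}, and Σ_{n+1}(X) := Σ_n(X) ∪ {w ∈ E⁰ : 0 < |s⁻¹(w)| < ∞ and r(e) ∈ Σ_n(X) for every e ∈ E¹ with s(e) = w}. Then the smallest saturated hereditary subset ΣH(X) of E⁰ containing X equals the union ⋃_{n≥0} Σ_n(X). -/
/-- A (countable) directed graph `E = (E⁰, E¹, r, s)`: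
a set of vertices, a set of edges, and range and source maps. -/
structure Digraph' where
  V : Type
  E : Type
  src : E → V
  rng : E → V

namespace Digraph'

variable (G : Digraph')

/-- `v ≥ w`: there is a path (possibly of length zero) from `v` to `w`. -/
def Reach (v w : G.V) : Prop :=
  Relation.ReflTransGen (fun a b : G.V => ∃ e : G.E, G.src e = a ∧ G.rng e = b) v w

/-- A set `H` of vertices is hereditary if `v ∈ H` and `v ≥ w` imply `w ∈ H`. -/
def Hereditary (H : Set G.V) : Prop :=
  ∀ ⦃v w : G.V⦄, v ∈ H → G.Reach v w → w ∈ H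

/-- A set `X` of vertices is saturated if every vertex `v` with `0 < |s⁻¹(v)| < ∞`
all of whose emitted edges have range in `X` itself belongs to `X`. -/
def Saturated (X : Set G.V) : Prop :=
  ∀ v : G.V, (G.src ⁻¹' {v}).Finite → (G.src ⁻¹' {v}).Nonempty →
    (∀ e : G.E, G.src e = v → G.rng e ∈ X) → v ∈ X

/-- The saturation `Σ(X)`: the smallest saturated set containing `X`. -/
def saturation (X : Set G.V) : Set G.V :=
  ⋂₀ {Y : Set G.V | G.Saturated Y ∧ X ⊆ Y}

/-- `ΣH(X)`: the smallest saturated hereditary set containing `X`. -/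
def satHered (X : Set G.V) : Set G.V :=
  ⋂₀ {Y : Set G.V | G.Saturated Y ∧ G.Hereditary Y ∧ X ⊆ Y}

end Digraph'

namespace Digraph'

variable (G : Digraph')

/-- The inductively defined sets `Σₙ(X)`. -/
def SigmaN (X : Set G.V) : ℕ → Set G.V
  | 0 => X ∪ {w : G.V | ∃ v ∈ X, G.Reach v w}
  | n + 1 => SigmaN X n ∪
      {w : G.V | (G.src ⁻¹' {w}).Nonempty ∧ (G.src ⁻¹' {w}).Finite ∧
        ∀ e : G.E, G.src e = w → G.rng e ∈ SigmaN X n}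

end Digraph'

/-!
`⋃ₙ Σₙ(X)` contains `X`, is hereditary because every `Σₙ(X)` is, and is saturated because a
vertex emitting finitely many edges into the increasing union already has all their ranges in a
single `Σₙ(X)`, so it lies in `Σₙ₊₁(X)`. Conversely, induction on `n` shows that every saturated
hereditary set containing `X` contains each `Σₙ(X)`.
-/

namespace Digraph'

variable (G : Digraph') (X : Set G.V)

lemma sigmaN_mono : Monotone (G.SigmaN X) :=
  monotone_nat_of_le_succ fun _ => Set.subset_union_left

lemma subset_sigmaN_zero : X ⊆ G.SigmaN X 0 :=
  Set.subset_union_left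

lemma hereditary_sigmaN (n : ℕ) : G.Hereditary (G.SigmaN X n) := by
  induction n with
  | zero =>
    rintro v w (hv | ⟨u, hu, huv⟩) hvw
    · exact Or.inr ⟨v, hv, hvw⟩
    · exact Or.inr ⟨u, hu, huv.trans hvw⟩
  | succ n ih =>
    rintro v w (hv | hsat) hvw
    · exact Or.inl (ih hv hvw)
    · rcases hvw.cases_head with rfl | ⟨u, ⟨e, rfl, rfl⟩, hu⟩
      · exact Or.inr hsat
      · exact Or.inl (ih (hsat.2.2 e rfl) hu)

lemma hereditary_iUnion_sigmaN : G.Hereditary (⋃ n, G.SigmaN X n) := by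
  intro v w hv hvw
  obtain ⟨n, hn⟩ := Set.mem_iUnion.1 hv
  exact Set.mem_iUnion.2 ⟨n, G.hereditary_sigmaN X n hn hvw⟩

lemma saturated_iUnion_sigmaN : G.Saturated (⋃ n, G.SigmaN X n) := by
  intro w hfin hne hall
  obtain ⟨N, hN⟩ : ∃ N, G.rng '' (G.src ⁻¹' {w}) ⊆ G.SigmaN X N := by
    simpa using (G.sigmaN_mono X).directed_le.exists_mem_subset_of_finset_subset_biUnion
      (s := (hfin.image G.rng).toFinset) (by simpa [Set.subset_def] using hall)
  exact Set.mem_iUnion.2 ⟨N + 1, Or.inr ⟨hne, hfin, fun e he => hN ⟨e, he, rfl⟩⟩⟩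

lemma sigmaN_subset_of_saturated_of_hereditary {Y : Set G.V} (hsat : G.Saturated Y)
    (hher : G.Hereditary Y) (hXY : X ⊆ Y) (n : ℕ) : G.SigmaN X n ⊆ Y := by
  induction n with
  | zero =>
    rintro v (hv | ⟨u, hu, huv⟩)
    · exact hXY hv
    · exact hher (hXY hu) huv
  | succ n ih =>
    rintro v (hv | ⟨hne, hfin, hall⟩)
    · exact ih hv
    · exact hsat v hfin hne fun e he => ih (hall e he)

end Digraph'

theorem stmt_3_general (G : Digraph') (X : Set G.V) :
    G.satHered X = ⋃ n : ℕ, G.SigmaN X n :=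
  subset_antisymm
    (Set.sInter_subset_of_mem ⟨G.saturated_iUnion_sigmaN X, G.hereditary_iUnion_sigmaN X,
      (G.subset_sigmaN_zero X).trans (Set.subset_iUnion _ 0)⟩)
    (Set.iUnion_subset fun n => Set.subset_sInter fun _ ⟨hsat, hher, hXY⟩ =>
      G.sigmaN_subset_of_saturated_of_hereditary X hsat hher hXY n)

/-- `ΣH(X)`, the smallest saturated hereditary set containing `X`,
is the union of the sets `Σₙ(X)`. -/
theorem stmt_3 (G : Digraph') [Countable G.V] [Countable G.E] (X : Set G.V) :
    G.satHered X = ⋃ n : ℕ, G.SigmaN X n :=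
  stmt_3_general G X
end

section
/- Let E be a directed graph and let v ∈ E⁰ be a vertex which emits infinitely many edges (|s⁻¹(v)| = ∞). Then Ω(v) := {w ∈ E⁰ \ {v} : w ≥ v fails} is a saturated hereditary subset of E⁰. -/
namespace Digraph'

variable (G : Digraph')

/-- `Ω(X)`: the vertices outside `X` from which there is no path to any vertex of `X`. -/
def Omega (X : Set G.V) : Set G.V :=
  {w : G.V | w ∉ X ∧ ∀ v ∈ X, ¬ G.Reach w v}

end Digraph'

namespace Digraph'

variable {G : Digraph'}

theorem Reach.trans {u v w : G.V} (huv : G.Reach u v) (hvw : G.Reach v w) : G.Reach u w :=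
  Relation.ReflTransGen.trans huv hvw

theorem Reach.eq_or_exists_edge {u w : G.V} (h : G.Reach u w) :
    u = w ∨ ∃ e : G.E, G.src e = u ∧ G.Reach (G.rng e) w := by
  rcases Relation.ReflTransGen.cases_head h with rfl | ⟨_, ⟨e, he, rfl⟩, htail⟩
  · exact Or.inl rfl
  · exact Or.inr ⟨e, he, htail⟩

theorem mem_omega_iff {X : Set G.V} {w : G.V} : w ∈ G.Omega X ↔ ∀ x ∈ X, ¬ G.Reach w x :=
  ⟨And.right, fun h => ⟨fun hw => h w hw Relation.ReflTransGen.refl, h⟩⟩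

theorem hereditary_omega (X : Set G.V) : G.Hereditary (G.Omega X) := by
  intro w u hw hwu
  rw [mem_omega_iff] at hw ⊢
  exact fun x hx hux => hw x hx (hwu.trans hux)

theorem saturated_omega {X : Set G.V} (hX : ∀ x ∈ X, (G.src ⁻¹' {x}).Infinite) :
    G.Saturated (G.Omega X) := by
  intro u hfin _ hall
  rw [mem_omega_iff]
  intro x hx hux
  rcases hux.eq_or_exists_edge with rfl | ⟨e, he, hex⟩
  · exact hX u hx hfin
  · exact mem_omega_iff.mp (hall e he) x hx hex

end Digraph'

theorem stmt_6_general (G : Digraph') (v : G.V)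
    (hv : (G.src ⁻¹' {v}).Infinite) :
    G.Saturated (G.Omega {v}) ∧ G.Hereditary (G.Omega {v}) :=
  ⟨Digraph'.saturated_omega fun _ hx => hx ▸ hv, Digraph'.hereditary_omega {v}⟩

/-- If `v` emits infinitely many edges, then
`Ω(v) = {w ≠ v : w ≥ v fails}` is saturated and hereditary. -/
theorem stmt_6 (G : Digraph') [Countable G.V] [Countable G.E] (v : G.V)
    (hv : (G.src ⁻¹' {v}).Infinite) :
    G.Saturated (G.Omega {v}) ∧ G.Hereditary (G.Omega {v}) :=
  stmt_6_general G v hv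
end

section
/- Let E be a directed graph, let K ⊆ E⁰ be saturated and hereditary, and let v, w ∈ E⁰. If {x ∈ E⁰ : v ≥ x} ∩ {x ∈ E⁰ : w ≥ x} ⊆ K, then ΣH(v) ∩ ΣH(w) ⊆ K. -/
/-!
`ΣH(v)` is the saturation of the hereditary set `T(v) = {x | v ≥ x}`. Saturation, described
inductively, preserves hereditary sets and commutes with intersections of hereditary sets, so
`ΣH(v) ∩ ΣH(w) ⊆ Σ(T(v)) ∩ Σ(T(w)) = Σ(T(v) ∩ T(w))`, which lies in any saturated `K`
containing `T(v) ∩ T(w)`.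
-/

namespace Digraph'

/-- `SatGen G X` is `G.saturation X` built up from `X` by the saturation rule. -/
inductive SatGen (G : Digraph') (X : Set G.V) : G.V → Prop
  | base {x : G.V} : x ∈ X → SatGen G X x
  | step {v : G.V} : (G.src ⁻¹' {v}).Finite → (G.src ⁻¹' {v}).Nonempty →
      (∀ e : G.E, G.src e = v → SatGen G X (G.rng e)) → SatGen G X v

variable {G : Digraph'}

theorem saturated_setOf_satGen (X : Set G.V) : G.Saturated {x | G.SatGen X x} :=
  fun _ hfin hne hrng => SatGen.step hfin hne hrng

theorem SatGen.mem_of_subset {X K : Set G.V} (hXK : X ⊆ K) (hK : G.Saturated K)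
    {x : G.V} (hx : G.SatGen X x) : x ∈ K := by
  induction hx with
  | base hx => exact hXK hx
  | step hfin hne _ ih => exact hK _ hfin hne ih

theorem reach_of_edge {e : G.E} : G.Reach (G.src e) (G.rng e) :=
  Relation.ReflTransGen.single ⟨e, rfl, rfl⟩

theorem Hereditary.setOf_satGen {X : Set G.V} (hX : G.Hereditary X) :
    G.Hereditary {x | G.SatGen X x} := by
  intro x y hx hxy
  induction hx generalizing y with
  | base hx => exact SatGen.base (hX hx hxy)
  | step hfin hne hrng ih =>
    rcases hxy.cases_head with rfl | ⟨z, ⟨e, rfl, rfl⟩, hzy⟩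
    · exact SatGen.step hfin hne hrng
    · exact ih e rfl hzy

theorem SatGen.inter {H₁ H₂ : Set G.V} (h₁ : G.Hereditary H₁) (h₂ : G.Hereditary H₂)
    {x : G.V} (hx₁ : G.SatGen H₁ x) (hx₂ : G.SatGen H₂ x) : G.SatGen (H₁ ∩ H₂) x := by
  induction hx₁ with
  | base hx =>
    induction hx₂ with
    | base hx' => exact SatGen.base ⟨hx, hx'⟩
    | step hfin hne _ ih =>
      exact SatGen.step hfin hne fun e he => ih e he (h₁ hx (he ▸ reach_of_edge))
  | step hfin hne _ ih =>
    exact SatGen.step hfin hne fun e he =>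
      ih e he (h₂.setOf_satGen hx₂ (he ▸ reach_of_edge))

theorem hereditary_setOf_reach (v : G.V) : G.Hereditary {x | G.Reach v x} :=
  fun _ _ hx hxy => Relation.ReflTransGen.trans hx hxy

theorem satHered_singleton_subset (v : G.V) :
    G.satHered {v} ⊆ {x | G.SatGen {x | G.Reach v x} x} :=
  fun _ hx => hx _ ⟨saturated_setOf_satGen _, (hereditary_setOf_reach v).setOf_satGen,
    Set.singleton_subset_iff.mpr (SatGen.base Relation.ReflTransGen.refl)⟩

end Digraph'

theorem stmt_8_general (G : Digraph') (K : Set G.V)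
    (hKsat : G.Saturated K) (v w : G.V)
    (h : {x : G.V | G.Reach v x} ∩ {x : G.V | G.Reach w x} ⊆ K) :
    G.satHered {v} ∩ G.satHered {w} ⊆ K := by
  rintro x ⟨hxv, hxw⟩
  have hx : G.SatGen ({x | G.Reach v x} ∩ {x | G.Reach w x}) x :=
    .inter (G.hereditary_setOf_reach v) (G.hereditary_setOf_reach w)
      (G.satHered_singleton_subset v hxv) (G.satHered_singleton_subset w hxw)
  exact hx.mem_of_subset h hKsat

/-- If `K` is saturated and hereditary and the common successors of `v`
and `w` all lie in `K`, then `ΣH(v) ∩ ΣH(w) ⊆ K`. -/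
theorem stmt_8 (G : Digraph') [Countable G.V] [Countable G.E] (K : Set G.V)
    (hKsat : G.Saturated K) (hKher : G.Hereditary K) (v w : G.V)
    (h : {x : G.V | G.Reach v x} ∩ {x : G.V | G.Reach w x} ⊆ K) :
    G.satHered {v} ∩ G.satHered {w} ⊆ K :=
  stmt_8_general G K hKsat v w h
end

section
/- Let E be a directed graph satisfying Condition (K) and let H ⊆ E⁰ be a hereditary subset. If α = α₁…αₙ is a loop in E all of whose vertices lie in E⁰ \ H, then α has an exit which avoids H: there exist an edge e ∈ E¹ and an index i with s(e) = s(αᵢ), e ≠ αᵢ, and r(e) ∉ H. -/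
namespace Digraph'

variable (G : Digraph')

/-- A nonempty list of edges is a path if consecutive edges are composable. -/
def IsEdgePath (l : List G.E) : Prop :=
  l.Chain' (fun e f : G.E => G.rng e = G.src f)

/-- A loop based at `v`: a path of positive length with source and range `v`. -/
def IsLoopAt (v : G.V) (l : List G.E) : Prop :=
  ∃ h : l ≠ [], G.IsEdgePath l ∧ G.src (l.head h) = v ∧ G.rng (l.getLast h) = v

/-- A loop: a path of positive length whose source and range coincide. -/
def IsLoop (l : List G.E) : Prop :=
  ∃ v : G.V, G.IsLoopAt v l

/-- `v` lies on a loop: `v` is one of the vertices (sources of the edges) of some loop. -/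
def OnLoop (v : G.V) : Prop :=
  ∃ l : List G.E, G.IsLoop l ∧ ∃ e ∈ l, G.src e = v

/-- Condition (K): every vertex either lies on no loop, or is the base of two loops
neither of which is an initial subpath of the other. -/
def ConditionK : Prop :=
  ∀ v : G.V, ¬ G.OnLoop v ∨
    ∃ α β : List G.E, G.IsLoopAt v α ∧ G.IsLoopAt v β ∧ ¬ α <+: β ∧ ¬ β <+: α

end Digraph'

/-!
The loop `l`, based at `v ∉ H`, traced round and round is an infinite path `f` starting at `v`.
Two loops at `v` which both follow `f` are both prefixes of a long enough initial segment of `f`,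
so one is a prefix of the other; hence one of the two loops given by Condition (K) leaves `f`.
At the first edge `e` where it does, `e` has the same source as the edge of `l` it replaces, and
`r(e)` reaches `v` along the rest of that loop, so `r(e) ∈ H` would force `v ∈ H`.
-/

namespace Digraph'

variable {G : Digraph'}

def IsInfinitePath (f : ℕ → G.E) : Prop :=
  ∀ i, G.rng (f i) = G.src (f (i + 1))

lemma IsEdgePath.rng_getElem {p : List G.E} (hp : G.IsEdgePath p) {i : ℕ}
    (hi : i + 1 < p.length) : G.rng p[i] = G.src p[i + 1] :=
  List.isChain_iff_getElem.1 hp i hi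

namespace IsLoopAt

variable {v : G.V} {γ : List G.E}

lemma length_pos (hγ : G.IsLoopAt v γ) : 0 < γ.length :=
  List.length_pos_iff.2 hγ.1

lemma src_getElem_zero (hγ : G.IsLoopAt v γ) (h : 0 < γ.length) : G.src γ[0] = v := by
  obtain ⟨hne, -, hhead, -⟩ := hγ
  rwa [List.head_eq_getElem] at hhead

lemma rng_getElem_last (hγ : G.IsLoopAt v γ) (h : γ.length - 1 < γ.length) :
    G.rng γ[γ.length - 1] = v := by
  obtain ⟨hne, -, -, hlast⟩ := hγ
  rwa [List.getLast_eq_getElem] at hlast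

lemma onLoop (hγ : G.IsLoopAt v γ) : G.OnLoop v :=
  ⟨γ, ⟨v, hγ⟩, γ.head hγ.1, List.head_mem hγ.1, hγ.2.2.1⟩

lemma reach_rng_getElem (hγ : G.IsLoopAt v γ) {j : ℕ} (hj : j < γ.length) :
    G.Reach (G.rng γ[j]) v := by
  induction hdist : γ.length - 1 - j generalizing j with
  | zero =>
    obtain rfl : j = γ.length - 1 := by omega
    rw [hγ.rng_getElem_last]
    exact .refl
  | succ k ih =>
    have hj' : j + 1 < γ.length := by omega
    rw [hγ.2.1.rng_getElem hj']
    exact .head ⟨_, rfl, rfl⟩ (ih hj' (by omega))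

lemma isInfinitePath_getElem_mod (hγ : G.IsLoopAt v γ) :
    G.IsInfinitePath fun i => γ[i % γ.length]'(Nat.mod_lt _ hγ.length_pos) := by
  intro i
  have hmod : (i % γ.length + 1) % γ.length = (i + 1) % γ.length := Nat.mod_add_mod _ _ _
  by_cases hi : i % γ.length + 1 < γ.length
  · simp only [hγ.2.1.rng_getElem hi, ← hmod, Nat.mod_eq_of_lt hi]
  · have hlast : i % γ.length = γ.length - 1 := by
      have := Nat.mod_lt i hγ.length_pos
      omega
    have hzero : (i + 1) % γ.length = 0 := by
      rw [← hmod, hlast, Nat.sub_add_cancel hγ.length_pos, Nat.mod_self]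
    simp only [hlast, hzero, hγ.rng_getElem_last, hγ.src_getElem_zero]

lemma src_getElem_eq_of_forall_lt {f : ℕ → G.E} (hf : G.IsInfinitePath f)
    (hγ : G.IsLoopAt v γ) (hf0 : G.src (f 0) = v) {j : ℕ} (hj : j < γ.length)
    (hagree : ∀ i (hi : i < j), γ[i] = f i) : G.src γ[j] = G.src (f j) := by
  cases j with
  | zero => rw [hγ.src_getElem_zero, hf0]
  | succ i => rw [← hγ.2.1.rng_getElem hj, hagree i i.lt_succ_self, hf]

lemma exists_getElem_ne_src_eq {f : ℕ → G.E} (hf : G.IsInfinitePath f)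
    (hγ : G.IsLoopAt v γ) (hf0 : G.src (f 0) = v)
    (hdiff : ∃ i, ∃ hi : i < γ.length, γ[i] ≠ f i) :
    ∃ j, ∃ hj : j < γ.length, γ[j] ≠ f j ∧ G.src γ[j] = G.src (f j) := by
  classical
  obtain ⟨hj, hne⟩ := Nat.find_spec hdiff
  refine ⟨Nat.find hdiff, hj, hne, hγ.src_getElem_eq_of_forall_lt hf hf0 hj fun i hi => ?_⟩
  by_contra h
  exact Nat.find_min hdiff hi ⟨by omega, h⟩

end IsLoopAt

end Digraph'

lemma List.prefix_or_prefix_of_forall_getElem_eq {α : Type*} {f : ℕ → α} {l₁ l₂ : List α}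
    (h₁ : ∀ i (hi : i < l₁.length), l₁[i] = f i) (h₂ : ∀ i (hi : i < l₂.length), l₂[i] = f i) :
    l₁ <+: l₂ ∨ l₂ <+: l₁ := by
  have hprefix {l : List α} (hl : ∀ i (hi : i < l.length), l[i] = f i) {n : ℕ}
      (hn : l.length ≤ n) : l <+: (List.range n).map f :=
    List.prefix_iff_getElem.2 ⟨by simpa using hn, fun i hi => by simp [hl]⟩
  exact List.prefix_or_prefix_of_prefix (hprefix h₁ (le_max_left _ l₂.length))
    (hprefix h₂ (le_max_right l₁.length _))

theorem stmt_9_general (G : Digraph') (hK : G.ConditionK)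
    (H : Set G.V) (hH : G.Hereditary H) (l : List G.E) (hl : G.IsLoop l)
    (hout : ∀ e ∈ l, G.src e ∉ H) :
    ∃ (e : G.E) (i : ℕ) (hi : i < l.length),
      G.src e = G.src (l.get ⟨i, hi⟩) ∧ e ≠ l.get ⟨i, hi⟩ ∧ G.rng e ∉ H := by
  obtain ⟨v, hv⟩ := hl
  have hvH : v ∉ H := hv.src_getElem_zero hv.length_pos ▸ hout _ (List.getElem_mem _)
  obtain ⟨α, β, hα, hβ, hαβ, hβα⟩ := (hK v).resolve_left (not_not_intro hv.onLoop)
  set f : ℕ → G.E := fun i => l[i % l.length]'(Nat.mod_lt _ hv.length_pos)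
  obtain ⟨γ, hγ, hγf⟩ : ∃ γ, G.IsLoopAt v γ ∧ ∃ i, ∃ hi : i < γ.length, γ[i] ≠ f i := by
    by_contra! h
    exact (List.prefix_or_prefix_of_forall_getElem_eq (h α hα) (h β hβ)).elim hαβ hβα
  obtain ⟨j, hj, hne, hsrc⟩ := hγ.exists_getElem_ne_src_eq hv.isInfinitePath_getElem_mod
    (by simpa [f] using hv.src_getElem_zero hv.length_pos) hγf
  exact ⟨γ[j], j % l.length, Nat.mod_lt _ hv.length_pos, hsrc, hne,
    fun hmem => hvH (hH hmem (hγ.reach_rng_getElem hj))⟩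

/-- In a graph satisfying Condition (K), every loop all of whose vertices
avoid a hereditary set `H` has an exit whose range avoids `H`. -/
theorem stmt_9 (G : Digraph') [Countable G.V] [Countable G.E] (hK : G.ConditionK)
    (H : Set G.V) (hH : G.Hereditary H) (l : List G.E) (hl : G.IsLoop l)
    (hout : ∀ e ∈ l, G.src e ∉ H) :
    ∃ (e : G.E) (i : ℕ) (hi : i < l.length),
      G.src e = G.src (l.get ⟨i, hi⟩) ∧ e ≠ l.get ⟨i, hi⟩ ∧ G.rng e ∉ H :=
  stmt_9_general G hK H hH l hl hout
end

section
/- Let E be a directed graph, let H ⊆ E⁰ be saturated and hereditary, and let B ⊆ H^fin_∞. Then β(B) := {β(v) : v ∈ B} is a saturated hereditary subset of the vertex set (E/H)⁰ of the quotient graph E/H, and the set (β(B))^fin_∞ computed in the graph E/H is empty. -/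
namespace Digraph'

variable (G : Digraph')

/-- `H^fin_∞`: the vertices outside `H` emitting infinitely many edges, but only
finitely many (and at least one) into `E⁰ \ H`. -/
def HfinInf (H : Set G.V) : Set G.V :=
  {v : G.V | v ∉ H ∧ (G.src ⁻¹' {v}).Infinite ∧
    {e : G.E | G.src e = v ∧ G.rng e ∉ H}.Finite ∧
    {e : G.E | G.src e = v ∧ G.rng e ∉ H}.Nonempty}

/-- The quotient graph `E/H` of a hereditary subset `H`: vertices are the vertices
outside `H` together with a new vertex `β(v)` (encoded `Sum.inr v`) for each
`v ∈ H^fin_∞`; edges are the edges of `E` with range outside `H` together with a new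
edge `β(e)` (encoded `Sum.inr e`) for each `e` with range in `H^fin_∞`, where
`s(β(e)) = s(e)` and `r(β(e)) = β(r(e))`. -/
def quotGraph (H : Set G.V) (hH : G.Hereditary H) : Digraph' where
  V := {v : G.V // v ∉ H} ⊕ {v : G.V // v ∈ G.HfinInf H}
  E := {e : G.E // G.rng e ∉ H} ⊕ {e : G.E // G.rng e ∈ G.HfinInf H}
  src := fun f =>
    match f with
    | Sum.inl e => Sum.inl ⟨G.src e.1, fun hs =>
        e.2 (hH hs (Relation.ReflTransGen.single ⟨e.1, rfl, rfl⟩))⟩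
    | Sum.inr e => Sum.inl ⟨G.src e.1, fun hs =>
        e.2.1 (hH hs (Relation.ReflTransGen.single ⟨e.1, rfl, rfl⟩))⟩
  rng := fun f =>
    match f with
    | Sum.inl e => Sum.inl ⟨G.rng e.1, e.2⟩
    | Sum.inr e => Sum.inr ⟨G.rng e.1, e.2⟩

end Digraph'

/-!
The new vertices `β(v)` of `E/H` are sinks, so any set of them is hereditary. Every new edge
`β(e)` has a companion `e` with the same source whose range `r(e) ∈ H^fin_∞` is an old vertex;
hence a vertex emitting an edge emits one leaving `β(B)`, which makes `β(B)` saturated, and the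
edges a vertex emits are at most twice as many as those it emits outside `β(B)`, so no vertex
can lie in `(β(B))^fin_∞`.
-/

namespace Digraph'

theorem hereditary_of_forall_src_ne (G : Digraph') {S : Set G.V}
    (hS : ∀ v ∈ S, ∀ e : G.E, G.src e ≠ v) : G.Hereditary S := by
  intro v w hv hvw
  rcases hvw.cases_head with rfl | ⟨_, ⟨e, he, -⟩, -⟩
  · exact hv
  · exact absurd he (hS v hv e)

section quotGraph

variable (G : Digraph') (H : Set G.V) (hH : G.Hereditary H)

theorem quotGraph_src_ne_inr (f : (G.quotGraph H hH).E) (w : {v : G.V // v ∈ G.HfinInf H}) :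
    (G.quotGraph H hH).src f ≠ Sum.inr w := by
  rcases f with _ | _ <;> exact Sum.inl_ne_inr

def companion (e : {e : G.E // G.rng e ∈ G.HfinInf H}) : (G.quotGraph H hH).E :=
  Sum.inl ⟨e.1, e.2.1⟩

theorem companion_injective : Function.Injective (companion G H hH) := by
  intro e e' h
  injection h with h
  exact Subtype.ext (congrArg Subtype.val h :)

theorem src_companion (e : {e : G.E // G.rng e ∈ G.HfinInf H}) :
    (G.quotGraph H hH).src (companion G H hH e) = (G.quotGraph H hH).src (Sum.inr e) :=
  rfl

theorem rng_companion (e : {e : G.E // G.rng e ∈ G.HfinInf H}) :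
    (G.quotGraph H hH).rng (companion G H hH e) = Sum.inl ⟨G.rng e.1, e.2.1⟩ :=
  rfl

theorem quotGraph_rng_inl (e : {e : G.E // G.rng e ∉ H}) :
    (G.quotGraph H hH).rng (Sum.inl e) = Sum.inl ⟨G.rng e.1, e.2⟩ :=
  rfl

variable {G H hH} {S : Set (G.quotGraph H hH).V}

theorem inl_notMem_of_subset_range_inr (hS : S ⊆ Set.range Sum.inr)
    (u : {v : G.V // v ∉ H}) : (Sum.inl u : (G.quotGraph H hH).V) ∉ S := fun hu => by
  obtain ⟨w, hw⟩ := hS hu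
  exact Sum.inr_ne_inl hw

theorem quotGraph_hereditary_of_subset_range_inr (hS : S ⊆ Set.range Sum.inr) :
    (G.quotGraph H hH).Hereditary S := by
  refine hereditary_of_forall_src_ne _ fun v hv f => ?_
  obtain ⟨w, rfl⟩ := hS hv
  exact quotGraph_src_ne_inr G H hH f w

theorem quotGraph_saturated_of_subset_range_inr (hS : S ⊆ Set.range Sum.inr) :
    (G.quotGraph H hH).Saturated S := by
  have hinl := inl_notMem_of_subset_range_inr hS
  rintro v - ⟨f, hf⟩ hall
  rcases f with e | e
  · exact absurd (hall _ hf) (hinl _)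
  · exact absurd (hall (companion G H hH e) ((src_companion G H hH e).trans hf)) (hinl _)

theorem quotGraph_finite_src_preimage (hS : S ⊆ Set.range Sum.inr)
    {v : (G.quotGraph H hH).V}
    (hfin : {f | (G.quotGraph H hH).src f = v ∧ (G.quotGraph H hH).rng f ∉ S}.Finite) :
    ((G.quotGraph H hH).src ⁻¹' {v}).Finite := by
  have hinl := inl_notMem_of_subset_range_inr hS
  refine Set.finite_preimage_inl_and_inr.mp ⟨?_, ?_⟩
  · refine (hfin.preimage Sum.inl_injective.injOn).subset fun e he => ⟨he, ?_⟩
    rw [quotGraph_rng_inl]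
    exact hinl _
  · refine (hfin.preimage (companion_injective G H hH).injOn).subset fun e he => ⟨he, ?_⟩
    rw [rng_companion]
    exact hinl _

theorem quotGraph_hfinInf_eq_empty_of_subset_range_inr (hS : S ⊆ Set.range Sum.inr) :
    (G.quotGraph H hH).HfinInf S = ∅ :=
  Set.eq_empty_of_forall_notMem fun _ ⟨_, hinf, hfin, _⟩ =>
    hinf (quotGraph_finite_src_preimage hS hfin)

end quotGraph

end Digraph'

theorem stmt_10_general (G : Digraph') (H : Set G.V)
    (hHher : G.Hereditary H) (B : Set G.V) :
    (G.quotGraph H hHher).Saturated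
        {u : (G.quotGraph H hHher).V | ∃ w : {v : G.V // v ∈ G.HfinInf H},
          w.1 ∈ B ∧ u = Sum.inr w} ∧
    (G.quotGraph H hHher).Hereditary
        {u : (G.quotGraph H hHher).V | ∃ w : {v : G.V // v ∈ G.HfinInf H},
          w.1 ∈ B ∧ u = Sum.inr w} ∧
    (G.quotGraph H hHher).HfinInf
        {u : (G.quotGraph H hHher).V | ∃ w : {v : G.V // v ∈ G.HfinInf H},
          w.1 ∈ B ∧ u = Sum.inr w} = ∅ := by
  have hB : {u : (G.quotGraph H hHher).V | ∃ w : {v : G.V // v ∈ G.HfinInf H},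
      w.1 ∈ B ∧ u = Sum.inr w} ⊆ Set.range Sum.inr := by
    rintro _ ⟨w, -, rfl⟩
    exact ⟨w, rfl⟩
  exact ⟨Digraph'.quotGraph_saturated_of_subset_range_inr hB,
    Digraph'.quotGraph_hereditary_of_subset_range_inr hB,
    Digraph'.quotGraph_hfinInf_eq_empty_of_subset_range_inr hB⟩

/-- For `H` saturated hereditary and `B ⊆ H^fin_∞`, the set
`β(B) = {β(v) : v ∈ B}` is a saturated hereditary subset of `(E/H)⁰`, and
`(β(B))^fin_∞` computed in `E/H` is empty. -/
theorem stmt_10 (G : Digraph') [Countable G.V] [Countable G.E] (H : Set G.V)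
    (hHsat : G.Saturated H) (hHher : G.Hereditary H) (B : Set G.V)
    (hB : B ⊆ G.HfinInf H) :
    (G.quotGraph H hHher).Saturated
        {u : (G.quotGraph H hHher).V | ∃ w : {v : G.V // v ∈ G.HfinInf H},
          w.1 ∈ B ∧ u = Sum.inr w} ∧
    (G.quotGraph H hHher).Hereditary
        {u : (G.quotGraph H hHher).V | ∃ w : {v : G.V // v ∈ G.HfinInf H},
          w.1 ∈ B ∧ u = Sum.inr w} ∧
    (G.quotGraph H hHher).HfinInf
        {u : (G.quotGraph H hHher).V | ∃ w : {v : G.V // v ∈ G.HfinInf H},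
          w.1 ∈ B ∧ u = Sum.inr w} = ∅ :=
  stmt_10_general G H hHher B
end

section
/- Let E be a directed graph, A a C*-algebra, {S_e, P_v} a Cuntz-Krieger E-family in A, and I a closed two-sided ideal of A. Then H_I := {v ∈ E⁰ : P_v ∈ I} is a saturated hereditary subset of E⁰. -/
namespace Digraph'

/-- A Cuntz-Krieger `E`-family in a C*-algebra `A`: mutually orthogonal projections
`P v`, elements `S e` with mutually orthogonal range projections, satisfying the
Cuntz-Krieger relations (G1)–(G3). -/
structure IsCKFamily (G : Digraph') {A : Type*} [NonUnitalCStarAlgebra A]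
    [PartialOrder A] [StarOrderedRing A] (P : G.V → A) (S : G.E → A) : Prop where
  proj_star : ∀ v : G.V, star (P v) = P v
  proj_idem : ∀ v : G.V, P v * P v = P v
  proj_orth : ∀ v w : G.V, v ≠ w → P v * P w = 0
  range_orth : ∀ e f : G.E, e ≠ f → (S e * star (S e)) * (S f * star (S f)) = 0
  ck1 : ∀ e : G.E, star (S e) * S e = P (G.rng e)
  ck2 : ∀ e : G.E, S e * star (S e) ≤ P (G.src e)
  ck3 : ∀ v : G.V, (G.src ⁻¹' {v}).Finite → (G.src ⁻¹' {v}).Nonempty →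
    P v = ∑ᶠ e ∈ G.src ⁻¹' {v}, S e * star (S e)

end Digraph'

/-- `J` is a closed two-sided ideal of the subalgebra (given as the subset `B`)
of the ambient C*-algebra. -/
def IsClosedIdealOf {A : Type*} [NonUnitalCStarAlgebra A] (B J : Set A) : Prop :=
  J ⊆ B ∧ IsClosed J ∧ (0 : A) ∈ J ∧
  (∀ a b : A, a ∈ J → b ∈ J → a + b ∈ J) ∧
  (∀ (c : ℂ) (a : A), a ∈ J → c • a ∈ J) ∧
  (∀ b a : A, b ∈ B → a ∈ J → b * a ∈ J ∧ a * b ∈ J)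

/-- The closed two-sided ideal of the subalgebra `B` generated by a subset `X`. -/
def closedIdealGenIn {A : Type*} [NonUnitalCStarAlgebra A] (B X : Set A) : Set A :=
  ⋂₀ {J : Set A | IsClosedIdealOf B J ∧ X ⊆ J}

/-- The C*-subalgebra `C*(S, P)` of `A` generated by a Cuntz-Krieger family,
regarded as a subset of `A`: the closure of the non-unital star subalgebra
generated by the `S e` and the `P v`. -/
def cstarSP {A : Type*} [NonUnitalCStarAlgebra A] (G : Digraph')
    (P : G.V → A) (S : G.E → A) : Set A :=
  closure ((NonUnitalStarAlgebra.adjoin ℂ (Set.range S ∪ Set.range P) :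
    NonUnitalStarSubalgebra ℂ A) : Set A)

/-! The projection `P (r e) = S e* P (s e) S e` lies in `I` as soon as `P (s e)` does, so `H_I` is
hereditary. Conversely `S e S e* = S e P (r e) S e*` lies in `I` when `P (r e)` does, so (G3)
writes `P v` as a finite sum of elements of `I` once every edge leaving `v` ends in `H_I`. -/

theorem mul_star_mul_self_of_isIdempotentElem {A : Type*} [NonUnitalNormedRing A] [StarRing A]
    [CStarRing A] {s : A} (hs : IsIdempotentElem (star s * s)) : s * (star s * s) = s := by
  rw [← sub_eq_zero, ← CStarRing.star_mul_self_eq_zero_iff]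
  have expand : star (s * (star s * s) - s) * (s * (star s * s) - s) =
      star s * s * (star s * s) * (star s * s) - star s * s * (star s * s) -
        star s * s * (star s * s) + star s * s := by
    simp only [star_sub, star_mul, star_star]
    noncomm_ring
  rw [expand, hs.eq, hs.eq]
  abel

namespace Digraph'

theorem hereditary_of_forall_edge (G : Digraph') {H : Set G.V}
    (hH : ∀ e : G.E, G.src e ∈ H → G.rng e ∈ H) : G.Hereditary H := by
  intro v w hv hvw
  induction hvw with
  | refl => exact hv
  | tail _ hstep ih =>
    obtain ⟨e, rfl, rfl⟩ := hstep
    exact hH e ih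

namespace IsCKFamily

variable {G : Digraph'} {A : Type*} [NonUnitalCStarAlgebra A] [PartialOrder A] [StarOrderedRing A]
  {P : G.V → A} {S : G.E → A}

theorem isStarProjection (hCK : G.IsCKFamily P S) (v : G.V) : IsStarProjection (P v) :=
  ⟨hCK.proj_idem v, hCK.proj_star v⟩

theorem mul_proj_rng (hCK : G.IsCKFamily P S) (e : G.E) : S e * P (G.rng e) = S e := by
  rw [← hCK.ck1]
  exact mul_star_mul_self_of_isIdempotentElem (hCK.ck1 e ▸ hCK.proj_idem _)

theorem isStarProjection_mul_star (hCK : G.IsCKFamily P S) (e : G.E) :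
    IsStarProjection (S e * star (S e)) where
  isIdempotentElem := by
    rw [IsIdempotentElem, ← mul_assoc, mul_assoc (S e), hCK.ck1, hCK.mul_proj_rng]
  isSelfAdjoint := IsSelfAdjoint.mul_star_self (S e)

theorem proj_src_mul (hCK : G.IsCKFamily P S) (e : G.E) : P (G.src e) * S e = S e := by
  have hrange : P (G.src e) * (S e * star (S e)) = S e * star (S e) :=
    ((hCK.isStarProjection_mul_star e).le_iff_mul_eq_right (hCK.isStarProjection _)).mp
      (hCK.ck2 e)
  calc P (G.src e) * S e = P (G.src e) * (S e * star (S e)) * S e := by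
        rw [mul_assoc, mul_assoc, hCK.ck1, hCK.mul_proj_rng]
    _ = S e := by rw [hrange, mul_assoc, hCK.ck1, hCK.mul_proj_rng]

theorem star_mul_proj_src_mul (hCK : G.IsCKFamily P S) (e : G.E) :
    star (S e) * P (G.src e) * S e = P (G.rng e) := by
  rw [mul_assoc, hCK.proj_src_mul, hCK.ck1]

end IsCKFamily

end Digraph'

namespace IsClosedIdealOf

variable {A : Type*} [NonUnitalCStarAlgebra A] {I : Set A}

theorem mul_mul_mem (hI : IsClosedIdealOf Set.univ I) (a c : A) {b : A} (hb : b ∈ I) :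
    a * b * c ∈ I :=
  (hI.2.2.2.2.2 c _ trivial (hI.2.2.2.2.2 a b trivial hb).1).2

theorem finsum_mem {ι : Type*} {B : Set A} (hI : IsClosedIdealOf B I) {s : Set ι} {f : ι → A}
    (hf : ∀ i ∈ s, f i ∈ I) : ∑ᶠ i ∈ s, f i ∈ I :=
  finsum_mem_induction (· ∈ I) hI.2.2.1 hI.2.2.2.1 hf

end IsClosedIdealOf

theorem stmt_11_general (G : Digraph')
    {A : Type*} [NonUnitalCStarAlgebra A] [PartialOrder A] [StarOrderedRing A]
    (P : G.V → A) (S : G.E → A) (hCK : G.IsCKFamily P S)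
    (I : Set A) (hI : IsClosedIdealOf (Set.univ : Set A) I) :
    G.Saturated {v : G.V | P v ∈ I} ∧ G.Hereditary {v : G.V | P v ∈ I} := by
  refine ⟨fun v hfin hne hrng ↦ ?_, G.hereditary_of_forall_edge fun e he ↦ ?_⟩
  · show P v ∈ I
    rw [hCK.ck3 v hfin hne]
    refine hI.finsum_mem fun e he ↦ ?_
    simpa only [hCK.mul_proj_rng] using hI.mul_mul_mem (S e) (star (S e)) (hrng e he)
  · show P (G.rng e) ∈ I
    exact hCK.star_mul_proj_src_mul e ▸ hI.mul_mul_mem _ _ he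

/-- For a Cuntz-Krieger `E`-family `{S, P}` in `A` and a closed
two-sided ideal `I` of `A`, the set `H_I = {v : P v ∈ I}` is saturated and hereditary. -/
theorem stmt_11 (G : Digraph') [Countable G.V] [Countable G.E]
    {A : Type*} [NonUnitalCStarAlgebra A] [PartialOrder A] [StarOrderedRing A]
    (P : G.V → A) (S : G.E → A) (hCK : G.IsCKFamily P S)
    (I : Set A) (hI : IsClosedIdealOf (Set.univ : Set A) I) :
    G.Saturated {v : G.V | P v ∈ I} ∧ G.Hereditary {v : G.V | P v ∈ I} :=
  stmt_11_general G P S hCK I hI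
end

section
/- Let E be a directed graph, A a C*-algebra, {S_e, P_v} a Cuntz-Krieger E-family in A, and H ⊆ E⁰ a hereditary subset. Let C*(S, P) denote the C*-subalgebra of A generated by {S_e : e ∈ E¹} ∪ {P_v : v ∈ E⁰}. Then the closed two-sided ideal of C*(S, P) generated by {P_v : v ∈ H} equals the closed two-sided ideal of C*(S, P) generated by {P_v : v ∈ Σ(H)}, where Σ(H) is the saturation of H. -/
/-!
One inclusion is `H ⊆ Σ(H)`. For the other, the set `{v | P v ∈ I}` is saturated for every
ideal `I` of `C*(S, P)`: if `v` emits finitely many edges, all with range in that set, then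
`P v = ∑ S e S e* = ∑ S e P (r e) S e*` lies in `I`, because (G1) makes each `S e` a partial
isometry with `S e P (r e) = S e`. So it contains `Σ(H)` as soon as it contains `H`.
-/

section ClosedIdeal

variable {A : Type*} [NonUnitalCStarAlgebra A] {B J X Y : Set A}

theorem IsClosedIdealOf.zero_mem (hJ : IsClosedIdealOf B J) : (0 : A) ∈ J :=
  hJ.2.2.1

theorem IsClosedIdealOf.add_mem (hJ : IsClosedIdealOf B J) {a b : A} (ha : a ∈ J)
    (hb : b ∈ J) : a + b ∈ J :=
  hJ.2.2.2.1 a b ha hb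

theorem IsClosedIdealOf.mul_mem_left (hJ : IsClosedIdealOf B J) {b a : A} (hb : b ∈ B)
    (ha : a ∈ J) : b * a ∈ J :=
  (hJ.2.2.2.2.2 b a hb ha).1

theorem IsClosedIdealOf.mul_mem_right (hJ : IsClosedIdealOf B J) {a b : A} (ha : a ∈ J)
    (hb : b ∈ B) : a * b ∈ J :=
  (hJ.2.2.2.2.2 b a hb ha).2

theorem isClosedIdealOf_self_of_isClosed (C : NonUnitalSubalgebra ℂ A)
    (hC : IsClosed (C : Set A)) : IsClosedIdealOf (C : Set A) C :=
  ⟨subset_rfl, hC, zero_mem C, fun _ _ => add_mem, fun c _ => SMulMemClass.smul_mem c,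
    fun _ _ hb ha => ⟨mul_mem hb ha, mul_mem ha hb⟩⟩

theorem isClosedIdealOf_closedIdealGenIn (hB : IsClosedIdealOf B B) (hXB : X ⊆ B) :
    IsClosedIdealOf B (closedIdealGenIn B X) :=
  ⟨fun _ hx => hx B ⟨hB, hXB⟩, isClosed_sInter fun _ hJ => hJ.1.2.1,
    fun _ hJ => hJ.1.zero_mem,
    fun _ _ ha hb J hJ => hJ.1.add_mem (ha J hJ) (hb J hJ),
    fun c a ha J hJ => hJ.1.2.2.2.2.1 c a (ha J hJ),
    fun _ _ hb ha => ⟨fun J hJ => hJ.1.mul_mem_left hb (ha J hJ),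
      fun J hJ => hJ.1.mul_mem_right (ha J hJ) hb⟩⟩

theorem subset_closedIdealGenIn : X ⊆ closedIdealGenIn B X :=
  fun _ hx _ hJ => hJ.2 hx

theorem closedIdealGenIn_mono (h : X ⊆ Y) : closedIdealGenIn B X ⊆ closedIdealGenIn B Y :=
  Set.sInter_subset_sInter fun _ hJ => ⟨hJ.1, h.trans hJ.2⟩

theorem closedIdealGenIn_subset (hJ : IsClosedIdealOf B J) (hX : X ⊆ J) :
    closedIdealGenIn B X ⊆ J :=
  Set.sInter_subset_of_mem ⟨hJ, hX⟩

end ClosedIdeal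

namespace Digraph'

variable (G : Digraph')

theorem subset_saturation (X : Set G.V) : X ⊆ G.saturation X :=
  fun _ hx _ hY => hY.2 hx

theorem saturation_subset {X Y : Set G.V} (hY : G.Saturated Y) (hXY : X ⊆ Y) :
    G.saturation X ⊆ Y :=
  Set.sInter_subset_of_mem ⟨hY, hXY⟩

end Digraph'

section CStarSP

variable {A : Type*} [NonUnitalCStarAlgebra A] (G : Digraph') (P : G.V → A) (S : G.E → A)

theorem cstarSP_eq_topologicalClosure :
    cstarSP G P S =
      (NonUnitalStarAlgebra.adjoin ℂ (Set.range S ∪ Set.range P)).topologicalClosure :=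
  rfl

theorem edge_mem_cstarSP (e : G.E) : S e ∈ cstarSP G P S :=
  subset_closure (NonUnitalStarAlgebra.subset_adjoin ℂ _ (Or.inl ⟨e, rfl⟩))

theorem star_edge_mem_cstarSP (e : G.E) : star (S e) ∈ cstarSP G P S := by
  have hS := edge_mem_cstarSP G P S e
  rw [cstarSP_eq_topologicalClosure] at hS ⊢
  exact star_mem hS

theorem vertex_mem_cstarSP (v : G.V) : P v ∈ cstarSP G P S :=
  subset_closure (NonUnitalStarAlgebra.subset_adjoin ℂ _ (Or.inr ⟨v, rfl⟩))

theorem isClosedIdealOf_cstarSP : IsClosedIdealOf (cstarSP G P S) (cstarSP G P S) :=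
  isClosedIdealOf_self_of_isClosed
    (NonUnitalStarAlgebra.adjoin ℂ (Set.range S ∪ Set.range P)).topologicalClosure.1
    (NonUnitalStarSubalgebra.isClosed_topologicalClosure _)

end CStarSP

namespace Digraph'.IsCKFamily

variable {G : Digraph'} {A : Type*} [NonUnitalCStarAlgebra A] [PartialOrder A]
  [StarOrderedRing A] {P : G.V → A} {S : G.E → A}

theorem saturated_setOf_proj_mem (hCK : G.IsCKFamily P S) {I : Set A}
    (hI : IsClosedIdealOf (cstarSP G P S) I) : G.Saturated {v | P v ∈ I} := by
  intro v hfin hne hrng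
  have hsum : P v = ∑ e ∈ hfin.toFinset, S e * star (S e) := by
    rw [hCK.ck3 v hfin hne, ← finsum_mem_coe_finset, hfin.coe_toFinset]
  show P v ∈ I
  rw [hsum]
  refine Finset.sum_induction _ (· ∈ I) (fun _ _ => hI.add_mem) hI.zero_mem fun e he => ?_
  suffices S e * (P (G.rng e) * star (S e)) ∈ I by
    rwa [← mul_assoc, hCK.mul_proj_rng] at this
  refine hI.mul_mem_left (edge_mem_cstarSP G P S e) (hI.mul_mem_right ?_ ?_)
  · exact hrng e (hfin.mem_toFinset.mp he)
  · exact star_edge_mem_cstarSP G P S e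

end Digraph'.IsCKFamily

theorem stmt_13_general (G : Digraph')
    {A : Type*} [NonUnitalCStarAlgebra A] [PartialOrder A] [StarOrderedRing A]
    (P : G.V → A) (S : G.E → A) (hCK : G.IsCKFamily P S)
    (H : Set G.V) :
    closedIdealGenIn (cstarSP G P S) {x : A | ∃ v ∈ H, x = P v} =
      closedIdealGenIn (cstarSP G P S) {x : A | ∃ v ∈ G.saturation H, x = P v} := by
  set I := closedIdealGenIn (cstarSP G P S) {x : A | ∃ v ∈ H, x = P v}
  have hI : IsClosedIdealOf (cstarSP G P S) I :=
    isClosedIdealOf_closedIdealGenIn (isClosedIdealOf_cstarSP G P S)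
      (by rintro _ ⟨v, -, rfl⟩; exact vertex_mem_cstarSP G P S v)
  have hHI : H ⊆ {v | P v ∈ I} := fun v hv => subset_closedIdealGenIn ⟨v, hv, rfl⟩
  have hsatI : G.saturation H ⊆ {v | P v ∈ I} :=
    G.saturation_subset (hCK.saturated_setOf_proj_mem hI) hHI
  apply subset_antisymm
  · exact closedIdealGenIn_mono fun _ ⟨v, hv, hx⟩ => ⟨v, G.subset_saturation H hv, hx⟩
  · exact closedIdealGenIn_subset hI fun _ ⟨v, hv, hx⟩ => hx ▸ hsatI hv

/-- For a hereditary set `H`, the closed two-sided ideal of `C*(S, P)`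
generated by `{P v : v ∈ H}` equals the one generated by `{P v : v ∈ Σ(H)}`. -/
theorem stmt_13 (G : Digraph') [Countable G.V] [Countable G.E]
    {A : Type*} [NonUnitalCStarAlgebra A] [PartialOrder A] [StarOrderedRing A]
    (P : G.V → A) (S : G.E → A) (hCK : G.IsCKFamily P S)
    (H : Set G.V) (hH : G.Hereditary H) :
    closedIdealGenIn (cstarSP G P S) {x : A | ∃ v ∈ H, x = P v} =
      closedIdealGenIn (cstarSP G P S) {x : A | ∃ v ∈ G.saturation H, x = P v} :=
  stmt_13_general G P S hCK H
end

section
/- Let E be a directed graph, H ⊆ E⁰ a saturated hereditary subset, A a C*-algebra, and {S_e, P_v} a Cuntz-Krieger E-family in A such that P_v = 0 for all v ∈ H. For v ∈ H^fin_∞ set P_{v,H} := Σ_{e : s(e) = v, r(e) ∉ H} S_e S_e* (a finite sum). Define, for the quotient graph E/H: Q_v := P_v for v ∈ (E⁰ \ H) \ H^fin_∞; Q_v := P_{v,H} for v ∈ H^fin_∞; Q_{β(v)} := P_v − P_{v,H} for v ∈ H^fin_∞; T_e := S_e for edges e ∈ E¹ with r(e) ∈ (E⁰ \ H) \ H^fin_∞;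 T_e := S_e P_{r(e),H} for edges e with r(e) ∈ H^fin_∞; and T_{β(e)} := S_e (P_{r(e)} − P_{r(e),H}) for edges e with r(e) ∈ H^fin_∞. Then {T_f, Q_u : u ∈ (E/H)⁰, f ∈ (E/H)¹} is a Cuntz-Krieger (E/H)-family in A. -/
attribute [local instance] Classical.propDecidable

namespace Digraph'

variable (G : Digraph')

/-- The projection `P_{v,H} = Σ_{s(e) = v, r(e) ∉ H} S_e S_e*` (a finite sum when
`v ∈ H^fin_∞`). -/
noncomputable def pvH {A : Type*} [NonUnitalCStarAlgebra A] (S : G.E → A)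
    (H : Set G.V) (v : G.V) : A :=
  ∑ᶠ e ∈ {e : G.E | G.src e = v ∧ G.rng e ∉ H}, S e * star (S e)

end Digraph'

namespace Digraph'

variable (G : Digraph')

/-- The projections `Q` of the quotient Cuntz-Krieger family:
`Q_v = P_v` for `v ∈ (E⁰ \ H) \ H^fin_∞`, `Q_v = P_{v,H}` for `v ∈ H^fin_∞`,
and `Q_{β(v)} = P_v − P_{v,H}` for `v ∈ H^fin_∞`. -/
noncomputable def quotQ {A : Type*} [NonUnitalCStarAlgebra A]
    (H : Set G.V) (hH : G.Hereditary H) (P : G.V → A) (S : G.E → A) :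
    (G.quotGraph H hH).V → A := fun u =>
  match u with
  | Sum.inl v => if v.1 ∈ G.HfinInf H then G.pvH S H v.1 else P v.1
  | Sum.inr v => P v.1 - G.pvH S H v.1

/-- The partial isometries `T` of the quotient Cuntz-Krieger family:
`T_e = S_e` if `r(e) ∈ (E⁰ \ H) \ H^fin_∞`, `T_e = S_e P_{r(e),H}` if
`r(e) ∈ H^fin_∞`, and `T_{β(e)} = S_e (P_{r(e)} − P_{r(e),H})`. -/
noncomputable def quotT {A : Type*} [NonUnitalCStarAlgebra A]
    (H : Set G.V) (hH : G.Hereditary H) (P : G.V → A) (S : G.E → A) :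
    (G.quotGraph H hH).E → A := fun f =>
  match f with
  | Sum.inl e => if G.rng e.1 ∈ G.HfinInf H then S e.1 * G.pvH S H (G.rng e.1)
      else S e.1
  | Sum.inr e => S e.1 * (P (G.rng e.1) - G.pvH S H (G.rng e.1))

end Digraph'


section Helpers

variable {A : Type*} [NonUnitalCStarAlgebra A]
  [PartialOrder A] [StarOrderedRing A]

lemma proj_absorb {p q : A} (hps : star p = p) (hpi : p * p = p)
    (hqs : star q = q) (hqi : q * q = q) (h : q ≤ p) :
    p * q = q ∧ q * p = q := by
  have hx : q - q * p * q = star (q - p * q) * (q - p * q) := by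
    have expand : star (q - p * q) * (q - p * q)
        = q * q - q * (p * q) - q * p * q + q * p * (p * q) := by
      simp only [star_sub, star_mul, hps, hqs]; noncomm_ring
    have h1 : q * p * (p * q) = q * p * q := by
      rw [show q * p * (p * q) = q * (p * p) * q by noncomm_ring, hpi]
    have h2 : q * (p * q) = q * p * q := by rw [← mul_assoc]
    rw [expand, hqi, h1, h2]; abel
  have hle1 : q ≤ q * p * q := by
    have hc := star_left_conjugate_le_conjugate h q
    rw [hqs] at hc
    calc q = q * q * q := by rw [hqi, hqi]
      _ ≤ q * p * q := hc
  have hle2 : q * p * q ≤ q := by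
    rw [← sub_nonneg, hx]; exact star_mul_self_nonneg _
  have h3 : q * p * q = q := le_antisymm hle2 hle1
  have h0 : q - p * q = 0 := by
    have hz : star (q - p * q) * (q - p * q) = 0 := by rw [← hx, h3, sub_self]
    exact (CStarRing.star_mul_self_eq_zero_iff _).mp hz
  have hpq : p * q = q := by
    rw [sub_eq_zero] at h0; exact h0.symm
  refine ⟨hpq, ?_⟩
  calc q * p = star (p * q) := by rw [star_mul, hps, hqs]
    _ = q := by rw [hpq, hqs]

end Helpers

namespace Digraph'.IsCKFamily

variable {G : Digraph'} {A : Type*} [NonUnitalCStarAlgebra A]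
  [PartialOrder A] [StarOrderedRing A]
  {P : G.V → A} {S : G.E → A}

variable (hCK : G.IsCKFamily P S)
include hCK

lemma sp (e : G.E) : S e * P (G.rng e) = S e := by
  have h1 := hCK.ck1 e
  have hp := hCK.proj_idem (G.rng e)
  have hps := hCK.proj_star (G.rng e)
  rw [← sub_eq_zero, ← CStarRing.star_mul_self_eq_zero_iff]
  have expand : star (S e * P (G.rng e) - S e) * (S e * P (G.rng e) - S e)
      = P (G.rng e) * (star (S e) * S e) * P (G.rng e)
        - P (G.rng e) * (star (S e) * S e)
        - (star (S e) * S e) * P (G.rng e) + star (S e) * S e := by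
    simp only [star_sub, star_mul, hps]; noncomm_ring
  rw [expand, h1]
  simp only [hp]
  abel

lemma q_mul_s (e : G.E) : (S e * star (S e)) * S e = S e := by
  rw [mul_assoc, hCK.ck1, hCK.sp]

lemma s_star_q (e : G.E) : star (S e) * (S e * star (S e)) = star (S e) := by
  have hq : star (S e * star (S e)) = S e * star (S e) := by
    simp [star_mul]
  rw [← hq, ← star_mul, hCK.q_mul_s]

lemma q_idem (e : G.E) :
    (S e * star (S e)) * (S e * star (S e)) = S e * star (S e) := by
  rw [← mul_assoc, q_mul_s hCK]

lemma ps (e : G.E) : P (G.src e) * S e = S e := by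
  have hq : star (S e * star (S e)) = S e * star (S e) := by simp [star_mul]
  have habs := (proj_absorb (hCK.proj_star _) (hCK.proj_idem _) hq
    (hCK.q_idem e) (hCK.ck2 e)).1
  rw [← hCK.q_mul_s e, ← mul_assoc, habs, hCK.q_mul_s]

lemma sp0 (e : G.E) {v : G.V} (hv : v ≠ G.rng e) : S e * P v = 0 := by
  rw [← hCK.sp e, mul_assoc, hCK.proj_orth (G.rng e) v (Ne.symm hv), mul_zero]

lemma ps0 (e : G.E) {v : G.V} (hv : v ≠ G.src e) : P v * S e = 0 := by
  rw [← hCK.ps e, ← mul_assoc, hCK.proj_orth v (G.src e) hv, zero_mul]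

lemma ortho {e f : G.E} (hef : e ≠ f) : star (S e) * S f = 0 := by
  calc star (S e) * S f
      = (star (S e) * (S e * star (S e))) * ((S f * star (S f)) * S f) := by
        rw [hCK.s_star_q, hCK.q_mul_s]
    _ = star (S e) * (((S e * star (S e)) * (S f * star (S f))) * S f) := by
        noncomm_ring
    _ = 0 := by rw [hCK.range_orth e f hef, zero_mul, mul_zero]

lemma q_mul_q_ne {e f : G.E} (hef : e ≠ f) :
    (S e * star (S e)) * S f = 0 := by
  conv_lhs => rw [← hCK.q_mul_s f]
  rw [← mul_assoc, hCK.range_orth e f hef, zero_mul]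

lemma s_eq_zero {H : Set G.V} (hzero : ∀ v ∈ H, P v = 0) {e : G.E}
    (he : G.rng e ∈ H) : S e = 0 := by
  rw [← hCK.sp e, hzero _ he, mul_zero]

end Digraph'.IsCKFamily

namespace Digraph'.IsCKFamily

variable {G : Digraph'} {A : Type*} [NonUnitalCStarAlgebra A]
  [PartialOrder A] [StarOrderedRing A]
  {P : G.V → A} {S : G.E → A} {H : Set G.V} {v w : G.V}

lemma pvH_eq (hT : {e : G.E | G.src e = v ∧ G.rng e ∉ H}.Finite) :
    G.pvH S H v = ∑ e ∈ hT.toFinset, S e * star (S e) := by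
  rw [Digraph'.pvH, finsum_mem_eq_finite_toFinset_sum _ hT]

lemma pvH_star (hT : {e : G.E | G.src e = v ∧ G.rng e ∉ H}.Finite) :
    star (G.pvH S H v) = G.pvH S H v := by
  rw [pvH_eq hT, star_sum]
  refine Finset.sum_congr rfl fun e _ => ?_
  simp [star_mul]

lemma pvH_nonneg (hT : {e : G.E | G.src e = v ∧ G.rng e ∉ H}.Finite) :
    0 ≤ G.pvH S H v := by
  rw [pvH_eq hT]
  exact Finset.sum_nonneg fun e _ => mul_star_self_nonneg _

variable (hCK : G.IsCKFamily P S)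
include hCK

lemma pvH_mul_s (hT : {e : G.E | G.src e = v ∧ G.rng e ∉ H}.Finite) (f : G.E) :
    G.pvH S H v * S f = if G.src f = v ∧ G.rng f ∉ H then S f else 0 := by
  rw [pvH_eq hT, Finset.sum_mul]
  by_cases hf : G.src f = v ∧ G.rng f ∉ H
  · rw [if_pos hf]
    rw [Finset.sum_eq_single_of_mem f (hT.mem_toFinset.mpr hf)
      (fun e _ hef => hCK.q_mul_q_ne hef)]
    exact hCK.q_mul_s f
  · rw [if_neg hf]
    refine Finset.sum_eq_zero fun e he => ?_
    have hef : e ≠ f := by rintro rfl; exact hf (hT.mem_toFinset.mp he)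
    exact hCK.q_mul_q_ne hef

lemma s_star_mul_pvH (hT : {e : G.E | G.src e = v ∧ G.rng e ∉ H}.Finite) (f : G.E) :
    star (S f) * G.pvH S H v
      = if G.src f = v ∧ G.rng f ∉ H then star (S f) else 0 := by
  have h := congrArg star (hCK.pvH_mul_s hT f)
  rwa [star_mul, pvH_star hT, apply_ite (star : A → A), star_zero] at h

lemma pvH_mul_P_self (hT : {e : G.E | G.src e = v ∧ G.rng e ∉ H}.Finite) :
    G.pvH S H v * P v = G.pvH S H v := by
  rw [pvH_eq hT, Finset.sum_mul]
  refine Finset.sum_congr rfl fun e he => ?_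
  obtain ⟨hsrc, -⟩ := hT.mem_toFinset.mp he
  have h1 : star (S e) * P v = star (S e) := by
    have := congrArg star (hsrc ▸ hCK.ps e)
    rwa [star_mul, hCK.proj_star] at this
  rw [mul_assoc, h1]

lemma pvH_mul_P_ne (hT : {e : G.E | G.src e = v ∧ G.rng e ∉ H}.Finite)
    (hw : w ≠ v) : G.pvH S H v * P w = 0 := by
  rw [pvH_eq hT, Finset.sum_mul]
  refine Finset.sum_eq_zero fun e he => ?_
  obtain ⟨hsrc, -⟩ := hT.mem_toFinset.mp he
  have h1 : star (S e) * P w = 0 := by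
    have := congrArg star (hCK.ps0 e (hsrc ▸ hw))
    rwa [star_mul, hCK.proj_star, star_zero] at this
  rw [mul_assoc, h1, mul_zero]

lemma P_mul_pvH_self (hT : {e : G.E | G.src e = v ∧ G.rng e ∉ H}.Finite) :
    P v * G.pvH S H v = G.pvH S H v := by
  have h := congrArg star (hCK.pvH_mul_P_self hT)
  rwa [star_mul, hCK.proj_star, pvH_star hT] at h

lemma P_mul_pvH_ne (hT : {e : G.E | G.src e = v ∧ G.rng e ∉ H}.Finite)
    (hw : w ≠ v) : P w * G.pvH S H v = 0 := by
  have h := congrArg star (hCK.pvH_mul_P_ne hT hw)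
  rwa [star_mul, hCK.proj_star, pvH_star hT, star_zero] at h

lemma pvH_idem (hT : {e : G.E | G.src e = v ∧ G.rng e ∉ H}.Finite) :
    G.pvH S H v * G.pvH S H v = G.pvH S H v := by
  have key : ∀ f ∈ hT.toFinset,
      G.pvH S H v * (S f * star (S f)) = S f * star (S f) := fun f hf => by
    obtain ⟨hsrc, hrng⟩ := hT.mem_toFinset.mp hf
    rw [← mul_assoc, hCK.pvH_mul_s hT f, if_pos ⟨hsrc, hrng⟩]
  nth_rewrite 2 [pvH_eq hT]
  rw [Finset.mul_sum, Finset.sum_congr rfl key, ← pvH_eq hT]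

lemma pvH_mul_pvH_ne (hTv : {e : G.E | G.src e = v ∧ G.rng e ∉ H}.Finite)
    (hTw : {e : G.E | G.src e = w ∧ G.rng e ∉ H}.Finite)
    (hvw : v ≠ w) : G.pvH S H v * G.pvH S H w = 0 := by
  rw [pvH_eq hTw, Finset.mul_sum]
  refine Finset.sum_eq_zero fun e he => ?_
  obtain ⟨hsrc, hrng⟩ := hTw.mem_toFinset.mp he
  rw [← mul_assoc, hCK.pvH_mul_s hTv e, if_neg (by rw [hsrc]; tauto), zero_mul]

lemma pvH_sub_star (hT : {e : G.E | G.src e = v ∧ G.rng e ∉ H}.Finite) :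
    star (P v - G.pvH S H v) = P v - G.pvH S H v := by
  rw [star_sub, hCK.proj_star, pvH_star hT]

lemma pvH_sub_idem (hT : {e : G.E | G.src e = v ∧ G.rng e ∉ H}.Finite) :
    (P v - G.pvH S H v) * (P v - G.pvH S H v) = P v - G.pvH S H v := by
  rw [mul_sub, sub_mul, sub_mul, hCK.proj_idem, hCK.pvH_mul_P_self hT,
    hCK.P_mul_pvH_self hT, hCK.pvH_idem hT]
  abel

lemma pvH_sub_nonneg (hT : {e : G.E | G.src e = v ∧ G.rng e ∉ H}.Finite) :
    0 ≤ P v - G.pvH S H v := by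
  have h : P v - G.pvH S H v
      = star (P v - G.pvH S H v) * (P v - G.pvH S H v) := by
    rw [hCK.pvH_sub_star hT, hCK.pvH_sub_idem hT]
  rw [h]; exact star_mul_self_nonneg _

lemma pvH_le_P (hT : {e : G.E | G.src e = v ∧ G.rng e ∉ H}.Finite) :
    G.pvH S H v ≤ P v := by
  rw [← sub_nonneg]; exact hCK.pvH_sub_nonneg hT

omit hCK in
lemma q_le_pvH (hT : {e : G.E | G.src e = v ∧ G.rng e ∉ H}.Finite) {f : G.E}
    (hf : G.src f = v ∧ G.rng f ∉ H) : S f * star (S f) ≤ G.pvH S H v := by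
  rw [← sub_nonneg, pvH_eq hT,
    ← Finset.sum_erase_add _ _ (hT.mem_toFinset.mpr hf), add_sub_cancel_right]
  exact Finset.sum_nonneg fun e _ => mul_star_self_nonneg _

end Digraph'.IsCKFamily

open Digraph'.IsCKFamily in
/-- If `{S, P}` is a Cuntz-Krieger `E`-family with `P v = 0` for all
`v ∈ H` (`H` saturated hereditary), then `{T, Q}` as defined above is a Cuntz-Krieger
`(E/H)`-family. -/
theorem stmt_15 (G : Digraph') [Countable G.V] [Countable G.E]
    {A : Type*} [NonUnitalCStarAlgebra A] [PartialOrder A] [StarOrderedRing A]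
    (H : Set G.V) (hHsat : G.Saturated H) (hHher : G.Hereditary H)
    (P : G.V → A) (S : G.E → A) (hCK : G.IsCKFamily P S)
    (hzero : ∀ v ∈ H, P v = 0) :
    (G.quotGraph H hHher).IsCKFamily (G.quotQ H hHher P S) (G.quotT H hHher P S) := by
  have hTfin : ∀ v ∈ G.HfinInf H, {e : G.E | G.src e = v ∧ G.rng e ∉ H}.Finite :=
    fun v hv => hv.2.2.1
  -- auxiliary computation lemmas for range orthogonality
  have main0 : ∀ (e e' : G.E) (m m' : A), e ≠ e' →
      (S e * m) * star (S e * m) * ((S e' * m') * star (S e' * m')) = 0 := by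
    intro e e' m m' h
    calc (S e * m) * star (S e * m) * ((S e' * m') * star (S e' * m'))
        = S e * ((m * star m) * ((star (S e) * S e') * (m' * (star m' * star (S e'))))) := by
          simp only [star_mul]; noncomm_ring
      _ = 0 := by rw [hCK.ortho h]; simp
  have main1 : ∀ (e : G.E) (m m' : A),
      m * star m * (P (G.rng e) * (m' * star m')) = 0 →
      (S e * m) * star (S e * m) * ((S e * m') * star (S e * m')) = 0 := by
    intro e m m' hmid
    calc (S e * m) * star (S e * m) * ((S e * m') * star (S e * m'))
        = S e * (m * star m * ((star (S e) * S e) * (m' * star m'))) * star (S e) := by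
          simp only [star_mul]; noncomm_ring
      _ = S e * (m * star m * (P (G.rng e) * (m' * star m'))) * star (S e) := by
          rw [hCK.ck1]
      _ = 0 := by rw [hmid]; simp
  have hmid1 : ∀ v : G.V, v ∈ G.HfinInf H →
      G.pvH S H v * star (G.pvH S H v) *
        (P v * ((P v - G.pvH S H v) * star (P v - G.pvH S H v))) = 0 := by
    intro v hv
    have hT := hTfin v hv
    rw [pvH_star hT, hCK.pvH_sub_star hT, hCK.pvH_sub_idem hT, hCK.pvH_idem hT,
      mul_sub, hCK.proj_idem, hCK.P_mul_pvH_self hT, mul_sub,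
      hCK.pvH_mul_P_self hT, hCK.pvH_idem hT, sub_self]
  have hmid2 : ∀ v : G.V, v ∈ G.HfinInf H →
      (P v - G.pvH S H v) * star (P v - G.pvH S H v) *
        (P v * (G.pvH S H v * star (G.pvH S H v))) = 0 := by
    intro v hv
    have hT := hTfin v hv
    rw [pvH_star hT, hCK.pvH_sub_star hT, hCK.pvH_sub_idem hT, hCK.pvH_idem hT,
      hCK.P_mul_pvH_self hT, sub_mul, hCK.P_mul_pvH_self hT, hCK.pvH_idem hT, sub_self]
  constructor
  case proj_star =>
    rintro (v | v)
    · simp only [Digraph'.quotQ]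
      by_cases hv : v.1 ∈ G.HfinInf H
      · rw [if_pos hv]; exact pvH_star (hTfin _ hv)
      · rw [if_neg hv]; exact hCK.proj_star _
    · simp only [Digraph'.quotQ]
      exact hCK.pvH_sub_star (hTfin _ v.2)
  case proj_idem =>
    rintro (v | v)
    · simp only [Digraph'.quotQ]
      by_cases hv : v.1 ∈ G.HfinInf H
      · rw [if_pos hv]; exact hCK.pvH_idem (hTfin _ hv)
      · rw [if_neg hv]; exact hCK.proj_idem _
    · simp only [Digraph'.quotQ]
      exact hCK.pvH_sub_idem (hTfin _ v.2)
  case proj_orth =>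
    rintro (v | v) (w | w) hvw
    · have hvw' : v.1 ≠ w.1 := fun h => hvw (by rw [Subtype.ext h])
      simp only [Digraph'.quotQ]
      by_cases hv : v.1 ∈ G.HfinInf H <;> by_cases hw : w.1 ∈ G.HfinInf H
      · rw [if_pos hv, if_pos hw]
        exact hCK.pvH_mul_pvH_ne (hTfin _ hv) (hTfin _ hw) hvw'
      · rw [if_pos hv, if_neg hw]
        exact hCK.pvH_mul_P_ne (hTfin _ hv) (Ne.symm hvw')
      · rw [if_neg hv, if_pos hw]
        exact hCK.P_mul_pvH_ne (hTfin _ hw) hvw'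
      · rw [if_neg hv, if_neg hw]
        exact hCK.proj_orth _ _ hvw'
    · simp only [Digraph'.quotQ]
      have hTw := hTfin _ w.2
      by_cases h : v.1 = w.1
      · have hv : v.1 ∈ G.HfinInf H := by rw [h]; exact w.2
        rw [if_pos hv, h, mul_sub, hCK.pvH_mul_P_self hTw, hCK.pvH_idem hTw, sub_self]
      · by_cases hv : v.1 ∈ G.HfinInf H
        · rw [if_pos hv, mul_sub, hCK.pvH_mul_P_ne (hTfin _ hv) (fun hh => h hh.symm),
            hCK.pvH_mul_pvH_ne (hTfin _ hv) hTw h, sub_self]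
        · rw [if_neg hv, mul_sub, hCK.proj_orth _ _ h,
            hCK.P_mul_pvH_ne hTw h, sub_self]
    · simp only [Digraph'.quotQ]
      have hTv := hTfin _ v.2
      by_cases h : w.1 = v.1
      · have hw : w.1 ∈ G.HfinInf H := by rw [h]; exact v.2
        rw [if_pos hw, h, sub_mul, hCK.P_mul_pvH_self hTv, hCK.pvH_idem hTv, sub_self]
      · by_cases hw : w.1 ∈ G.HfinInf H
        · rw [if_pos hw, sub_mul, hCK.P_mul_pvH_ne (hTfin _ hw) (fun hh => h hh.symm),
            hCK.pvH_mul_pvH_ne hTv (hTfin _ hw) (fun hh => h hh.symm), sub_self]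
        · rw [if_neg hw, sub_mul, hCK.proj_orth _ _ (fun hh => h hh.symm),
            hCK.pvH_mul_P_ne hTv h, sub_self]
    · have hvw' : v.1 ≠ w.1 := fun h => hvw (by rw [Subtype.ext h])
      simp only [Digraph'.quotQ]
      have hTv := hTfin _ v.2
      have hTw := hTfin _ w.2
      rw [sub_mul, mul_sub, mul_sub, hCK.proj_orth _ _ hvw',
        hCK.P_mul_pvH_ne hTw hvw', hCK.pvH_mul_P_ne hTv (Ne.symm hvw'),
        hCK.pvH_mul_pvH_ne hTv hTw hvw']
      simp
  case range_orth =>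
    rintro (e | e) (e' | e') hfg
    · have hne : e.1 ≠ e'.1 := fun h => hfg (by rw [Subtype.ext h])
      simp only [Digraph'.quotT]
      by_cases h1 : G.rng e.1 ∈ G.HfinInf H <;> by_cases h2 : G.rng e'.1 ∈ G.HfinInf H
      · rw [if_pos h1, if_pos h2]; exact main0 _ _ _ _ hne
      · rw [if_pos h1, if_neg h2]
        conv_lhs => rw [← hCK.sp e'.1]
        exact main0 _ _ _ _ hne
      · rw [if_neg h1, if_pos h2]
        conv_lhs => rw [← hCK.sp e.1]
        exact main0 _ _ _ _ hne
      · rw [if_neg h1, if_neg h2]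
        conv_lhs => rw [← hCK.sp e.1, ← hCK.sp e'.1]
        exact main0 _ _ _ _ hne
    · simp only [Digraph'.quotT]
      by_cases h : e.1 = e'.1
      · have h1 : G.rng e.1 ∈ G.HfinInf H := by rw [h]; exact e'.2
        rw [if_pos h1, h]
        exact main1 _ _ _ (hmid1 _ e'.2)
      · by_cases h1 : G.rng e.1 ∈ G.HfinInf H
        · rw [if_pos h1]; exact main0 _ _ _ _ h
        · rw [if_neg h1]
          conv_lhs => rw [← hCK.sp e.1]
          exact main0 _ _ _ _ h
    · simp only [Digraph'.quotT]
      by_cases h : e.1 = e'.1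
      · have h2 : G.rng e'.1 ∈ G.HfinInf H := by rw [← h]; exact e.2
        rw [if_pos h2, ← h]
        exact main1 _ _ _ (hmid2 _ e.2)
      · by_cases h2 : G.rng e'.1 ∈ G.HfinInf H
        · rw [if_pos h2]; exact main0 _ _ _ _ h
        · rw [if_neg h2]
          conv_lhs => rw [← hCK.sp e'.1]
          exact main0 _ _ _ _ h
    · have hne : e.1 ≠ e'.1 := fun h => hfg (by rw [Subtype.ext h])
      simp only [Digraph'.quotT]
      exact main0 _ _ _ _ hne
  case ck1 =>
    rintro (e | e)
    · simp only [Digraph'.quotT, Digraph'.quotGraph, Digraph'.quotQ]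
      by_cases h : G.rng e.1 ∈ G.HfinInf H
      · rw [if_pos h, if_pos h]
        have hT := hTfin _ h
        calc star (S e.1 * G.pvH S H (G.rng e.1)) * (S e.1 * G.pvH S H (G.rng e.1))
            = G.pvH S H (G.rng e.1) * (star (S e.1) * S e.1) * G.pvH S H (G.rng e.1) := by
              rw [star_mul, pvH_star hT]; noncomm_ring
          _ = G.pvH S H (G.rng e.1) * P (G.rng e.1) * G.pvH S H (G.rng e.1) := by
              rw [hCK.ck1]
          _ = G.pvH S H (G.rng e.1) := by
              rw [hCK.pvH_mul_P_self hT, hCK.pvH_idem hT]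
      · rw [if_neg h, if_neg h]; exact hCK.ck1 e.1
    · simp only [Digraph'.quotT, Digraph'.quotGraph, Digraph'.quotQ]
      have hT := hTfin _ e.2
      calc star (S e.1 * (P (G.rng e.1) - G.pvH S H (G.rng e.1)))
            * (S e.1 * (P (G.rng e.1) - G.pvH S H (G.rng e.1)))
          = (P (G.rng e.1) - G.pvH S H (G.rng e.1)) * (star (S e.1) * S e.1)
            * (P (G.rng e.1) - G.pvH S H (G.rng e.1)) := by
            rw [star_mul, hCK.pvH_sub_star hT]; noncomm_ring
        _ = (P (G.rng e.1) - G.pvH S H (G.rng e.1)) * P (G.rng e.1)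
            * (P (G.rng e.1) - G.pvH S H (G.rng e.1)) := by rw [hCK.ck1]
        _ = P (G.rng e.1) - G.pvH S H (G.rng e.1) := by
            rw [sub_mul, hCK.proj_idem, hCK.pvH_mul_P_self hT, hCK.pvH_sub_idem hT]
  case ck2 =>
    have step2 : ∀ (e : G.E) (_ : G.rng e ∉ H) (hsrc : G.src e ∉ H),
        S e * star (S e) ≤ G.quotQ H hHher P S (Sum.inl ⟨G.src e, hsrc⟩) := by
      intro e hrng hsrc
      simp only [Digraph'.quotQ]
      by_cases hs : G.src e ∈ G.HfinInf H
      · rw [if_pos hs]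
        exact q_le_pvH (hTfin _ hs) ⟨rfl, hrng⟩
      · rw [if_neg hs]
        exact hCK.ck2 e
    rintro (e | e)
    · simp only [Digraph'.quotT, Digraph'.quotGraph]
      by_cases h : G.rng e.1 ∈ G.HfinInf H
      · rw [if_pos h]
        have hT := hTfin _ h
        refine le_trans ?_ (step2 e.1 e.2 _)
        calc (S e.1 * G.pvH S H (G.rng e.1)) * star (S e.1 * G.pvH S H (G.rng e.1))
            = S e.1 * G.pvH S H (G.rng e.1) * star (S e.1) := by
              rw [star_mul, pvH_star hT,
                show S e.1 * G.pvH S H (G.rng e.1) * (G.pvH S H (G.rng e.1) * star (S e.1))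
                  = S e.1 * (G.pvH S H (G.rng e.1) * G.pvH S H (G.rng e.1)) * star (S e.1) by
                  noncomm_ring, hCK.pvH_idem hT]
          _ ≤ S e.1 * P (G.rng e.1) * star (S e.1) :=
              star_right_conjugate_le_conjugate (hCK.pvH_le_P hT) (S e.1)
          _ = S e.1 * star (S e.1) := by rw [hCK.sp]
      · rw [if_neg h]
        exact step2 e.1 e.2 _
    · simp only [Digraph'.quotT, Digraph'.quotGraph]
      have hT := hTfin _ e.2
      refine le_trans ?_ (step2 e.1 e.2.1 _)
      calc (S e.1 * (P (G.rng e.1) - G.pvH S H (G.rng e.1)))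
            * star (S e.1 * (P (G.rng e.1) - G.pvH S H (G.rng e.1)))
          = S e.1 * (P (G.rng e.1) - G.pvH S H (G.rng e.1)) * star (S e.1) := by
            rw [star_mul, hCK.pvH_sub_star hT,
              show S e.1 * (P (G.rng e.1) - G.pvH S H (G.rng e.1))
                  * ((P (G.rng e.1) - G.pvH S H (G.rng e.1)) * star (S e.1))
                = S e.1 * ((P (G.rng e.1) - G.pvH S H (G.rng e.1))
                  * (P (G.rng e.1) - G.pvH S H (G.rng e.1))) * star (S e.1) by
                noncomm_ring, hCK.pvH_sub_idem hT]
        _ ≤ S e.1 * P (G.rng e.1) * star (S e.1) :=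
            star_right_conjugate_le_conjugate
              (sub_le_self _ (pvH_nonneg hT)) (S e.1)
        _ = S e.1 * star (S e.1) := by rw [hCK.sp]
  case ck3 =>
    rintro (w | w) hufin hune
    · -- the main case
      set sl : Set {e : G.E // G.rng e ∉ H} := {e | G.src e.1 = w.1} with hsl_def
      set sr : Set {e : G.E // G.rng e ∈ G.HfinInf H} := {e | G.src e.1 = w.1} with hsr_def
      have hmeml : ∀ e : {e : G.E // G.rng e ∉ H},
          (G.quotGraph H hHher).src (Sum.inl e) = Sum.inl w ↔ G.src e.1 = w.1 := by
        intro e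
        constructor
        · intro h1
          exact congrArg Subtype.val (Sum.inl.inj h1)
        · intro h1
          exact congrArg Sum.inl (Subtype.ext h1)
      have hmemr : ∀ e : {e : G.E // G.rng e ∈ G.HfinInf H},
          (G.quotGraph H hHher).src (Sum.inr e) = Sum.inl w ↔ G.src e.1 = w.1 := by
        intro e
        constructor
        · intro h1
          exact congrArg Subtype.val (Sum.inl.inj h1)
        · intro h1
          exact congrArg Sum.inl (Subtype.ext h1)
      have hpre : (G.quotGraph H hHher).src ⁻¹' (@singleton (G.quotGraph H hHher).V _ _ (Sum.inl w))
          = Sum.inl '' sl ∪ Sum.inr '' sr := by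
        ext f
        rcases f with e | e
        · show (G.quotGraph H hHher).src (Sum.inl e) = Sum.inl w ↔
            (∃ a ∈ sl, Sum.inl a = Sum.inl e) ∨ ∃ a ∈ sr, Sum.inr a = Sum.inl e
          rw [hmeml e]
          constructor
          · intro h1
            exact Or.inl ⟨e, h1, rfl⟩
          · rintro (⟨a, ha, h1⟩ | ⟨a, ha, h1⟩)
            · exact Sum.inl.inj h1 ▸ ha
            · exact (Sum.inr_ne_inl h1).elim
        · show (G.quotGraph H hHher).src (Sum.inr e) = Sum.inl w ↔
            (∃ a ∈ sl, Sum.inl a = Sum.inr e) ∨ ∃ a ∈ sr, Sum.inr a = Sum.inr e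
          rw [hmemr e]
          constructor
          · intro h1
            exact Or.inr ⟨e, h1, rfl⟩
          · rintro (⟨a, ha, h1⟩ | ⟨a, ha, h1⟩)
            · exact (Sum.inl_ne_inr h1).elim
            · exact Sum.inr.inj h1 ▸ ha
      have hdisj : Disjoint (Sum.inl '' sl : Set (G.quotGraph H hHher).E)
          (Sum.inr '' sr : Set (G.quotGraph H hHher).E) := by
        rw [Set.disjoint_left]
        rintro _ ⟨a, -, rfl⟩ ⟨b, -, hb⟩
        exact Sum.inr_ne_inl hb
      have hslfin : sl.Finite := by
        have h1 : (Sum.inl '' sl : Set (G.quotGraph H hHher).E).Finite :=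
          hufin.subset (by rw [hpre]; exact Set.subset_union_left)
        exact Set.Finite.of_finite_image h1 Sum.inl_injective.injOn
      have hsrfin : sr.Finite := by
        have h1 : (Sum.inr '' sr : Set (G.quotGraph H hHher).E).Finite :=
          hufin.subset (by rw [hpre]; exact Set.subset_union_right)
        exact Set.Finite.of_finite_image h1 Sum.inr_injective.injOn
      have hTw_eq : {x : G.E | G.src x = w.1 ∧ G.rng x ∉ H} = Subtype.val '' sl := by
        ext x
        constructor
        · rintro ⟨h1, h2⟩; exact ⟨⟨x, h2⟩, h1, rfl⟩
        · rintro ⟨a, ha, rfl⟩; exact ⟨ha, a.2⟩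
      have hTw'_eq : {x : G.E | G.src x = w.1 ∧ G.rng x ∈ G.HfinInf H}
          = Subtype.val '' sr := by
        ext x
        constructor
        · rintro ⟨h1, h2⟩; exact ⟨⟨x, h2⟩, h1, rfl⟩
        · rintro ⟨a, ha, rfl⟩; exact ⟨ha, a.2⟩
      have hTwfin : {x : G.E | G.src x = w.1 ∧ G.rng x ∉ H}.Finite := by
        rw [hTw_eq]; exact hslfin.image _
      have hTw'fin : {x : G.E | G.src x = w.1 ∧ G.rng x ∈ G.HfinInf H}.Finite := by
        rw [hTw'_eq]; exact hsrfin.image _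
      have hTwne : {x : G.E | G.src x = w.1 ∧ G.rng x ∉ H}.Nonempty := by
        obtain ⟨f, hf⟩ := hune
        rw [hpre] at hf
        rcases hf with ⟨a, ha, rfl⟩ | ⟨a, ha, rfl⟩
        · exact ⟨a.1, ha, a.2⟩
        · exact ⟨a.1, ha, a.2.1⟩
      have hsum : (∑ᶠ f ∈ (G.quotGraph H hHher).src ⁻¹' (@singleton (G.quotGraph H hHher).V _ _ (Sum.inl w)),
            G.quotT H hHher P S f * star (G.quotT H hHher P S f))
          = (∑ᶠ x ∈ {x : G.E | G.src x = w.1 ∧ G.rng x ∉ H},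
              (if G.rng x ∈ G.HfinInf H then S x * G.pvH S H (G.rng x) else S x) *
                star (if G.rng x ∈ G.HfinInf H then S x * G.pvH S H (G.rng x) else S x))
            + ∑ᶠ x ∈ {x : G.E | G.src x = w.1 ∧ G.rng x ∈ G.HfinInf H},
                (S x * (P (G.rng x) - G.pvH S H (G.rng x))) *
                  star (S x * (P (G.rng x) - G.pvH S H (G.rng x))) := by
        rw [hpre]
        show (∑ᶠ f ∈ (Sum.inl '' sl ∪ Sum.inr '' sr :
            Set (G.quotGraph H hHher).E),
            G.quotT H hHher P S f * star (G.quotT H hHher P S f)) = _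
        rw [finsum_mem_union hdisj (hslfin.image _) (hsrfin.image _)]
        erw [finsum_mem_image Sum.inl_injective.injOn,
          finsum_mem_image Sum.inr_injective.injOn]
        rw [hTw_eq, hTw'_eq,
          finsum_mem_image Subtype.val_injective.injOn,
          finsum_mem_image Subtype.val_injective.injOn]
        simp only [Digraph'.quotT]
      have hcomb : (∑ᶠ x ∈ {x : G.E | G.src x = w.1 ∧ G.rng x ∉ H},
              (if G.rng x ∈ G.HfinInf H then S x * G.pvH S H (G.rng x) else S x) *
                star (if G.rng x ∈ G.HfinInf H then S x * G.pvH S H (G.rng x) else S x))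
            + (∑ᶠ x ∈ {x : G.E | G.src x = w.1 ∧ G.rng x ∈ G.HfinInf H},
                (S x * (P (G.rng x) - G.pvH S H (G.rng x))) *
                  star (S x * (P (G.rng x) - G.pvH S H (G.rng x))))
          = G.pvH S H w.1 := by
        rw [finsum_mem_eq_finite_toFinset_sum _ hTwfin,
          finsum_mem_eq_finite_toFinset_sum _ hTw'fin]
        have hsub : hTw'fin.toFinset
            = hTwfin.toFinset.filter (fun x => G.rng x ∈ G.HfinInf H) := by
          ext x
          simp only [Set.Finite.mem_toFinset, Finset.mem_filter, Set.mem_setOf_eq]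
          constructor
          · rintro ⟨h1, h2⟩; exact ⟨⟨h1, h2.1⟩, h2⟩
          · rintro ⟨⟨h1, -⟩, h2⟩; exact ⟨h1, h2⟩
        rw [hsub, Finset.sum_filter, ← Finset.sum_add_distrib, pvH_eq hTwfin]
        refine Finset.sum_congr rfl fun x hx => ?_
        obtain ⟨hsrc, hrng⟩ := hTwfin.mem_toFinset.mp hx
        by_cases hx2 : G.rng x ∈ G.HfinInf H
        · rw [if_pos hx2, if_pos hx2]
          have hT := hTfin _ hx2
          rw [star_mul, star_mul, pvH_star hT, hCK.pvH_sub_star hT,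
            show S x * G.pvH S H (G.rng x) * (G.pvH S H (G.rng x) * star (S x))
              = S x * (G.pvH S H (G.rng x) * G.pvH S H (G.rng x)) * star (S x) by
              noncomm_ring,
            show S x * (P (G.rng x) - G.pvH S H (G.rng x))
                * ((P (G.rng x) - G.pvH S H (G.rng x)) * star (S x))
              = S x * ((P (G.rng x) - G.pvH S H (G.rng x))
                * (P (G.rng x) - G.pvH S H (G.rng x))) * star (S x) by noncomm_ring,
            hCK.pvH_idem hT, hCK.pvH_sub_idem hT,
            show S x * G.pvH S H (G.rng x) * star (S x)
                + S x * (P (G.rng x) - G.pvH S H (G.rng x)) * star (S x)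
              = (S x * P (G.rng x)) * star (S x) by noncomm_ring, hCK.sp]
        · rw [if_neg hx2, if_neg hx2, add_zero]
      rw [hsum, hcomb]
      simp only [Digraph'.quotQ]
      by_cases hw : w.1 ∈ G.HfinInf H
      · rw [if_pos hw]
      · rw [if_neg hw]
        have hsfin : (G.src ⁻¹' {w.1}).Finite := by
          by_contra hinf
          exact hw ⟨w.2, hinf, hTwfin, hTwne⟩
        have hsne : (G.src ⁻¹' {w.1}).Nonempty := by
          obtain ⟨x, hx⟩ := hTwne
          exact ⟨x, hx.1⟩
        rw [hCK.ck3 w.1 hsfin hsne, Digraph'.pvH]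
        refine finsum_mem_inter_support_eq' _ _ _ fun x hx => ?_
        simp only [Set.mem_preimage, Set.mem_singleton_iff, Set.mem_setOf_eq]
        constructor
        · intro hx1
          refine ⟨hx1, fun hr => hx ?_⟩
          show S x * star (S x) = 0
          rw [hCK.s_eq_zero hzero hr, zero_mul]
        · intro hx1; exact hx1.1
    · exfalso
      obtain ⟨f, hf⟩ := hune
      rcases f with e | e <;>
        exact Sum.inl_ne_inr hf
end

section
/- Let E be a directed graph, H ⊆ E⁰ a saturated hereditary subset, A a C*-algebra, and {T_f, Q_u} a Cuntz-Krieger (E/H)-family in A, where E/H is the quotient graph. Define P_v := Q_v if v ∈ E⁰ \ (H ∪ H^fin_∞); P_v := Q_v + Q_{β(v)} if v ∈ H^fin_∞; P_v := 0 if v ∈ H; and S_e := T_e if r(e) ∉ H ∪ H^fin_∞; S_e := T_e + T_{β(e)} if r(e) ∈ H^fin_∞; S_e := 0 if r(e) ∈ H. Then {S_e, P_v : v ∈ E⁰, e ∈ E¹} is a Cuntz-Krieger E-family in A with P_v = 0 for all v ∈ H. Moreover, for v ∈ H^fin_∞ one has P_{v,H} := Σ_{e : s(e) = v, r(e) ∉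 H} S_e S_e* = Q_v, so that P_v − P_{v,H} = Q_{β(v)}. -/
attribute [local instance] Classical.propDecidable

namespace Digraph'

variable (G : Digraph')

/-- The projections `P` built from a Cuntz-Krieger `(E/H)`-family `{T, Q}`:
`P_v = Q_v` if `v ∈ E⁰ \ (H ∪ H^fin_∞)`, `P_v = Q_v + Q_{β(v)}` if `v ∈ H^fin_∞`,
and `P_v = 0` if `v ∈ H`. -/
noncomputable def liftP {A : Type*} [NonUnitalCStarAlgebra A]
    (H : Set G.V) (hH : G.Hereditary H) (Q : (G.quotGraph H hH).V → A) :
    G.V → A := fun v =>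
  if hv : v ∈ H then 0
  else if hf : v ∈ G.HfinInf H then Q (Sum.inl ⟨v, hv⟩) + Q (Sum.inr ⟨v, hf⟩)
  else Q (Sum.inl ⟨v, hv⟩)

/-- The elements `S` built from a Cuntz-Krieger `(E/H)`-family `{T, Q}`:
`S_e = T_e` if `r(e) ∉ H ∪ H^fin_∞`, `S_e = T_e + T_{β(e)}` if `r(e) ∈ H^fin_∞`,
and `S_e = 0` if `r(e) ∈ H`. -/
noncomputable def liftS {A : Type*} [NonUnitalCStarAlgebra A]
    (H : Set G.V) (hH : G.Hereditary H) (T : (G.quotGraph H hH).E → A) :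
    G.E → A := fun e =>
  if he : G.rng e ∈ H then 0
  else if hf : G.rng e ∈ G.HfinInf H then T (Sum.inl ⟨e, he⟩) + T (Sum.inr ⟨e, hf⟩)
  else T (Sum.inl ⟨e, he⟩)

end Digraph'


set_option linter.unusedSectionVars false

section CStarLemmas
variable {A : Type*} [NonUnitalCStarAlgebra A] [PartialOrder A] [StarOrderedRing A]

lemma proj_nonneg {p : A} (hs : star p = p) (hi : p * p = p) : (0 : A) ≤ p := by
  have : p = star p * p := by rw [hs, hi]
  rw [this]; exact star_mul_self_nonneg p

/-- A partial isometry absorbs its support projection. -/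
lemma pisom_absorb {s : A} (h : (star s * s) * (star s * s) = star s * s) :
    s * (star s * s) = s := by
  have hz : star (s * (star s * s) - s) * (s * (star s * s) - s) = 0 := by
    have hss : star (star s * s) = star s * s := by simp [star_mul, mul_assoc]
    rw [star_sub, star_mul, hss]
    have : (star s * s * star s - star s) * (s * (star s * s) - s)
        = (star s * s) * (star s * s) * (star s * s) - (star s * s) * (star s * s)
          - (star s * s) * (star s * s) + star s * s := by noncomm_ring
    rw [this, h, h]
    abel
  exact sub_eq_zero.mp ((CStarRing.star_mul_self_eq_zero_iff _).mp hz)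

lemma pisom_absorb' {s : A} (h : (star s * s) * (star s * s) = star s * s) :
    (s * star s) * s = s := by
  rw [mul_assoc]; exact pisom_absorb h

/-- The range projection of a partial isometry is a projection. -/
lemma range_proj_idem {s : A} (h : (star s * s) * (star s * s) = star s * s) :
    (s * star s) * (s * star s) = s * star s := by
  have := pisom_absorb h
  calc (s * star s) * (s * star s) = (s * (star s * s)) * star s := by noncomm_ring
    _ = s * star s := by rw [this]

lemma range_proj_star (s : A) : star (s * star s) = s * star s := by
  simp [star_mul]

/-- Cross terms vanish: if the support projections are orthogonal. -/
lemma cross_mul_star {s t p q : A} (hp : star s * s = p) (hq : star t * t = q)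
    (hpp : p * p = p) (hqq : q * q = q) (hqs : star q = q) (hpq : p * q = 0) :
    s * star t = 0 := by
  have hs : s * p = s := by rw [← hp] at hpp ⊢; exact pisom_absorb hpp
  have ht : t * q = t := by rw [← hq] at hqq ⊢; exact pisom_absorb hqq
  calc s * star t = (s * p) * star (t * q) := by rw [hs, ht]
    _ = s * (p * q) * star t := by rw [star_mul, hqs]; noncomm_ring
    _ = 0 := by rw [hpq]; simp

/-- Cross terms vanish: if the range projections are orthogonal. -/
lemma cross_star_mul {s t : A} (hs : (star s * s) * (star s * s) = star s * s)
    (ht : (star t * t) * (star t * t) = star t * t)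
    (h : (s * star s) * (t * star t) = 0) :
    star s * t = 0 := by
  have h1 := pisom_absorb' hs
  have h2 := pisom_absorb' ht
  calc star s * t = star ((s * star s) * s) * ((t * star t) * t) := by rw [h1, h2]
    _ = star s * ((s * star s) * (t * star t)) * t := by
        rw [star_mul, range_proj_star]; noncomm_ring
    _ = 0 := by rw [h]; simp

/-- A projection dominated by a projection is absorbed by it. -/
lemma proj_le_absorb {p r : A} (hps : star p = p) (hpi : p * p = p)
    (hrs : star r = r) (hri : r * r = r) (hle : p ≤ r) : r * p = p := by
  have h1 : p ≤ p * r * p := by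
    have := star_left_conjugate_le_conjugate hle p
    rwa [hps, hpi, hpi] at this
  have hnr : ‖r‖ ≤ 1 := by
    have h := CStarRing.norm_star_mul_self (x := r)
    rw [hrs, hri] at h
    nlinarith [norm_nonneg r]
  have h2 : p * r * p ≤ p := by
    have hc : star p * r * p ≤ ‖r‖ • (star p * p) := CStarAlgebra.star_left_conjugate_le_norm_smul hrs
    rw [hps, hpi] at hc
    refine hc.trans ?_
    have h0 : (0:A) ≤ (1 - ‖r‖) • p := smul_nonneg (by linarith) (proj_nonneg hps hpi)
    have h3 : (1 - ‖r‖) • p = p - ‖r‖ • p := by rw [sub_smul, one_smul]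
    rw [h3] at h0
    exact sub_nonneg.mp h0
  have heq : p * r * p = p := le_antisymm h2 h1
  have hz : star (r * p - p) * (r * p - p) = 0 := by
    rw [star_sub, star_mul, hps, hrs]
    have : (p * r - p) * (r * p - p) = p * (r * r) * p - p * r * p - p * r * p + p * p := by
      noncomm_ring
    rw [this, hri, heq, hpi]
    abel
  exact sub_eq_zero.mp ((CStarRing.star_mul_self_eq_zero_iff _).mp hz)

/-- Two orthogonal subprojections of a projection sum to a subprojection. -/
lemma proj_add_le {p q r : A} (hps : star p = p) (hpi : p * p = p)
    (hqs : star q = q) (hqi : q * q = q)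
    (hrs : star r = r) (hri : r * r = r)
    (hpq : p * q = 0) (hpr : p ≤ r) (hqr : q ≤ r) : p + q ≤ r := by
  have hrp : r * p = p := proj_le_absorb hps hpi hrs hri hpr
  have hrq : r * q = q := proj_le_absorb hqs hqi hrs hri hqr
  have hpr' : p * r = p := by
    have := congrArg star hrp; rwa [star_mul, hps, hrs] at this
  have hqr' : q * r = q := by
    have := congrArg star hrq; rwa [star_mul, hqs, hrs] at this
  have hqp : q * p = 0 := by
    have := congrArg star hpq; rwa [star_mul, hps, hqs, star_zero] at this
  set s := r - p - q with hsdef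
  have hss : star s = s := by rw [hsdef, star_sub, star_sub, hps, hqs, hrs]
  have hsi : s * s = s := by
    have : (r - p - q) * (r - p - q)
        = r * r - r * p - r * q - p * r + p * p + p * q - q * r + q * p + q * q := by
      noncomm_ring
    rw [hsdef, this, hri, hrp, hrq, hpr', hpi, hpq, hqr', hqp, hqi]
    abel
  have : (0:A) ≤ s := proj_nonneg hss hsi
  have h2 : p + q ≤ p + q + s := le_add_of_nonneg_right this
  have : p + q + s = r := by rw [hsdef]; abel
  rwa [this] at h2

end CStarLemmas

section GraphLemmas
namespace Digraph'
variable {G : Digraph'} {A : Type*} [NonUnitalCStarAlgebra A] [PartialOrder A] [StarOrderedRing A]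
  {H : Set G.V} (hHher : G.Hereditary H)
  {Q : (G.quotGraph H hHher).V → A} {T : (G.quotGraph H hHher).E → A}
  (hCK : (G.quotGraph H hHher).IsCKFamily Q T)

lemma rng_inl (x : {e : G.E // G.rng e ∉ H}) :
    (G.quotGraph H hHher).rng (Sum.inl x) = Sum.inl ⟨G.rng x.1, x.2⟩ := rfl

lemma rng_inr (x : {e : G.E // G.rng e ∈ G.HfinInf H}) :
    (G.quotGraph H hHher).rng (Sum.inr x) = Sum.inr ⟨G.rng x.1, x.2⟩ := rfl

lemma src_inl (x : {e : G.E // G.rng e ∉ H}) :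
    (G.quotGraph H hHher).src (Sum.inl x) = Sum.inl ⟨G.src x.1, fun hs =>
        x.2 (hHher hs (Relation.ReflTransGen.single ⟨x.1, rfl, rfl⟩))⟩ := rfl

lemma src_inr (x : {e : G.E // G.rng e ∈ G.HfinInf H}) :
    (G.quotGraph H hHher).src (Sum.inr x) = Sum.inl ⟨G.src x.1, fun hs =>
        x.2.1 (hHher hs (Relation.ReflTransGen.single ⟨x.1, rfl, rfl⟩))⟩ := rfl

section WithCK
include hCK

lemma Tsupp (g : (G.quotGraph H hHher).E) :
    (star (T g) * T g) * (star (T g) * T g) = star (T g) * T g := by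
  rw [hCK.ck1]; exact hCK.proj_idem _

lemma Tcross1 {g h : (G.quotGraph H hHher).E}
    (hne : (G.quotGraph H hHher).rng g ≠ (G.quotGraph H hHher).rng h) :
    T g * star (T h) = 0 :=
  cross_mul_star (hCK.ck1 g) (hCK.ck1 h) (hCK.proj_idem _) (hCK.proj_idem _)
    (hCK.proj_star _) (hCK.proj_orth _ _ hne)

lemma Tcross2 {g h : (G.quotGraph H hHher).E} (hne : g ≠ h) :
    star (T g) * T h = 0 :=
  cross_star_mul (Tsupp hHher hCK g) (Tsupp hHher hCK h) (hCK.range_orth g h hne)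

end WithCK
end Digraph'
end GraphLemmas


section LiftLemmas
namespace Digraph'
variable {G : Digraph'} {A : Type*} [NonUnitalCStarAlgebra A] [PartialOrder A] [StarOrderedRing A]
  {H : Set G.V} (hHher : G.Hereditary H)
  {Q : (G.quotGraph H hHher).V → A} {T : (G.quotGraph H hHher).E → A}

lemma liftP_mem {v : G.V} (hv : v ∈ H) : G.liftP H hHher Q v = 0 := dif_pos hv

lemma liftP_fin {v : G.V} (hv : v ∉ H) (hf : v ∈ G.HfinInf H) :
    G.liftP H hHher Q v = Q (Sum.inl ⟨v, hv⟩) + Q (Sum.inr ⟨v, hf⟩) :=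
  (dif_neg hv).trans (dif_pos hf)

lemma liftP_not {v : G.V} (hv : v ∉ H) (hf : v ∉ G.HfinInf H) :
    G.liftP H hHher Q v = Q (Sum.inl ⟨v, hv⟩) :=
  (dif_neg hv).trans (dif_neg hf)

lemma liftS_mem {e : G.E} (he : G.rng e ∈ H) : G.liftS H hHher T e = 0 := dif_pos he

lemma liftS_fin {e : G.E} (he : G.rng e ∉ H) (hf : G.rng e ∈ G.HfinInf H) :
    G.liftS H hHher T e = T (Sum.inl ⟨e, he⟩) + T (Sum.inr ⟨e, hf⟩) :=
  (dif_neg he).trans (dif_pos hf)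

lemma liftS_not {e : G.E} (he : G.rng e ∉ H) (hf : G.rng e ∉ G.HfinInf H) :
    G.liftS H hHher T e = T (Sum.inl ⟨e, he⟩) :=
  (dif_neg he).trans (dif_neg hf)

variable (hCK : (G.quotGraph H hHher).IsCKFamily Q T)
include hCK

lemma liftP_star (v : G.V) : star (G.liftP H hHher Q v) = G.liftP H hHher Q v := by
  by_cases hv : v ∈ H
  · rw [liftP_mem hHher hv]; simp
  by_cases hf : v ∈ G.HfinInf H
  · erw [liftP_fin hHher hv hf, star_add, hCK.proj_star, hCK.proj_star]
  · erw [liftP_not hHher hv hf, hCK.proj_star]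

lemma liftP_idem (v : G.V) :
    G.liftP H hHher Q v * G.liftP H hHher Q v = G.liftP H hHher Q v := by
  by_cases hv : v ∈ H
  · rw [liftP_mem hHher hv]; simp
  by_cases hf : v ∈ G.HfinInf H
  · erw [liftP_fin hHher hv hf, add_mul, mul_add, mul_add,
      hCK.proj_idem, hCK.proj_idem, hCK.proj_orth _ _ (by intro h; cases h),
      hCK.proj_orth _ _ (by intro h; cases h)]
    abel
  · erw [liftP_not hHher hv hf, hCK.proj_idem]

lemma liftP_nonneg (v : G.V) : (0 : A) ≤ G.liftP H hHher Q v :=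
  proj_nonneg (liftP_star hHher hCK v) (liftP_idem hHher hCK v)

lemma liftP_orth {v w : G.V} (hvw : v ≠ w) :
    G.liftP H hHher Q v * G.liftP H hHher Q w = 0 := by
  have qo : ∀ a b, a ≠ b → Q a * Q b = 0 := hCK.proj_orth
  have nll : ∀ (h1 : v ∉ H) (h2 : w ∉ H),
      (Sum.inl ⟨v, h1⟩ : (G.quotGraph H hHher).V) ≠ Sum.inl ⟨w, h2⟩ := by
    intro h1 h2
    simp only [ne_eq, Sum.inl.injEq, Subtype.mk.injEq]; exact hvw
  have nrr : ∀ (h1 : v ∈ G.HfinInf H) (h2 : w ∈ G.HfinInf H),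
      (Sum.inr ⟨v, h1⟩ : (G.quotGraph H hHher).V) ≠ Sum.inr ⟨w, h2⟩ := by
    intro h1 h2
    simp only [ne_eq, Sum.inr.injEq, Subtype.mk.injEq]; exact hvw
  by_cases hv : v ∈ H
  · rw [liftP_mem hHher hv]; simp
  by_cases hw : w ∈ H
  · rw [liftP_mem hHher (Q := Q) hw]; simp
  by_cases hfv : v ∈ G.HfinInf H <;> by_cases hfw : w ∈ G.HfinInf H
  · erw [liftP_fin hHher hv hfv, liftP_fin hHher hw hfw, add_mul, mul_add, mul_add,
      qo _ _ (nll hv hw), qo _ _ (by intro h; cases h), qo _ _ (by intro h; cases h), qo _ _ (nrr hfv hfw)]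
    abel
  · erw [liftP_fin hHher hv hfv, liftP_not hHher hw hfw, add_mul,
      qo _ _ (nll hv hw), qo _ _ (by intro h; cases h)]
    abel
  · erw [liftP_not hHher hv hfv, liftP_fin hHher hw hfw, mul_add,
      qo _ _ (nll hv hw), qo _ _ (by intro h; cases h)]
    abel
  · erw [liftP_not hHher hv hfv, liftP_not hHher hw hfw, qo _ _ (nll hv hw)]

lemma SSstar_fin {e : G.E} (he : G.rng e ∉ H) (hf : G.rng e ∈ G.HfinInf H) :
    G.liftS H hHher T e * star (G.liftS H hHher T e)
      = T (Sum.inl ⟨e, he⟩) * star (T (Sum.inl ⟨e, he⟩))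
        + T (Sum.inr ⟨e, hf⟩) * star (T (Sum.inr ⟨e, hf⟩)) := by
  rw [liftS_fin hHher he hf]
  have h1 : T (Sum.inl ⟨e, he⟩) * star (T (Sum.inr ⟨e, hf⟩)) = 0 :=
    Tcross1 hHher hCK (by rw [rng_inl, rng_inr]; intro h; cases h)
  have h2 : T (Sum.inr ⟨e, hf⟩) * star (T (Sum.inl ⟨e, he⟩)) = 0 :=
    Tcross1 hHher hCK (by rw [rng_inl, rng_inr]; intro h; cases h)
  rw [star_add, mul_add, add_mul, add_mul, h1, h2]
  abel

lemma ck1_lift (e : G.E) :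
    star (G.liftS H hHher T e) * G.liftS H hHher T e = G.liftP H hHher Q (G.rng e) := by
  by_cases he : G.rng e ∈ H
  · rw [liftS_mem hHher he, liftP_mem hHher he]; simp
  by_cases hf : G.rng e ∈ G.HfinInf H
  · rw [liftS_fin hHher he hf, liftP_fin hHher he hf]
    have h1 : star (T (Sum.inl ⟨e, he⟩)) * T (Sum.inr ⟨e, hf⟩) = 0 :=
      Tcross2 hHher hCK (by intro h; cases h)
    have h2 : star (T (Sum.inr ⟨e, hf⟩)) * T (Sum.inl ⟨e, he⟩) = 0 :=
      Tcross2 hHher hCK (by intro h; cases h)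
    erw [star_add, add_mul, mul_add, mul_add, h1, h2, hCK.ck1, hCK.ck1, rng_inl, rng_inr]
    abel
  · erw [liftS_not hHher he hf, liftP_not hHher he hf, hCK.ck1, rng_inl]


lemma ck2_lift (e : G.E) :
    G.liftS H hHher T e * star (G.liftS H hHher T e) ≤ G.liftP H hHher Q (G.src e) := by
  by_cases he : G.rng e ∈ H
  · rw [liftS_mem hHher he]
    simpa using liftP_nonneg hHher hCK (G.src e)
  have hsrc : G.src e ∉ H := fun hs =>
    he (hHher hs (Relation.ReflTransGen.single ⟨e, rfl, rfl⟩))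
  have hQle : Q (Sum.inl ⟨G.src e, fun hs =>
      he (hHher hs (Relation.ReflTransGen.single ⟨e, rfl, rfl⟩))⟩) ≤ G.liftP H hHher Q (G.src e) := by
    by_cases hfs : G.src e ∈ G.HfinInf H
    · rw [liftP_fin hHher hsrc hfs]
      exact le_add_of_nonneg_right (proj_nonneg (hCK.proj_star _) (hCK.proj_idem _))
    · rw [liftP_not hHher hsrc hfs]
  by_cases hf : G.rng e ∈ G.HfinInf H
  · rw [SSstar_fin hHher hCK he hf]
    refine le_trans ?_ hQle
    exact proj_add_le (range_proj_star _) (range_proj_idem (Tsupp hHher hCK _))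
      (range_proj_star _) (range_proj_idem (Tsupp hHher hCK _))
      (hCK.proj_star _) (hCK.proj_idem _)
      (hCK.range_orth _ _ (by intro h; cases h))
      (hCK.ck2 (Sum.inl ⟨e, he⟩)) (hCK.ck2 (Sum.inr ⟨e, hf⟩))
  · rw [liftS_not hHher he hf]
    exact le_trans (hCK.ck2 (Sum.inl ⟨e, he⟩)) hQle

lemma range_orth_lift {e f : G.E} (hef : e ≠ f) :
    (G.liftS H hHher T e * star (G.liftS H hHher T e))
      * (G.liftS H hHher T f * star (G.liftS H hHher T f)) = 0 := by
  have ro := hCK.range_orth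
  by_cases he : G.rng e ∈ H
  · rw [liftS_mem hHher he]; simp
  by_cases hf : G.rng f ∈ H
  · rw [liftS_mem hHher (T := T) hf]; simp
  have nll : ∀ (h1 : G.rng e ∉ H) (h2 : G.rng f ∉ H),
      (Sum.inl ⟨e, h1⟩ : (G.quotGraph H hHher).E) ≠ Sum.inl ⟨f, h2⟩ := by
    intro h1 h2; simp only [ne_eq, Sum.inl.injEq, Subtype.mk.injEq]; exact hef
  have nrr : ∀ (h1 : G.rng e ∈ G.HfinInf H) (h2 : G.rng f ∈ G.HfinInf H),
      (Sum.inr ⟨e, h1⟩ : (G.quotGraph H hHher).E) ≠ Sum.inr ⟨f, h2⟩ := by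
    intro h1 h2; simp only [ne_eq, Sum.inr.injEq, Subtype.mk.injEq]; exact hef
  by_cases hfe : G.rng e ∈ G.HfinInf H <;> by_cases hff : G.rng f ∈ G.HfinInf H
  · erw [SSstar_fin hHher hCK he hfe, SSstar_fin hHher hCK hf hff, add_mul, mul_add, mul_add,
      ro _ _ (nll he hf), ro _ _ (by intro h; cases h), ro _ _ (by intro h; cases h), ro _ _ (nrr hfe hff)]
    abel
  · erw [SSstar_fin hHher hCK he hfe, liftS_not hHher hf hff, add_mul,
      ro _ _ (nll he hf), ro _ _ (by intro h; cases h)]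
    abel
  · erw [liftS_not hHher he hfe, SSstar_fin hHher hCK hf hff, mul_add,
      ro _ _ (nll he hf), ro _ _ (by intro h; cases h)]
    abel
  · erw [liftS_not hHher he hfe, liftS_not hHher hf hff, ro _ _ (nll he hf)]

lemma key_sum (v : G.V) (hv : v ∉ H) (F : Finset G.E)
    (hF : ∀ e, e ∈ F ↔ (G.src e = v ∧ G.rng e ∉ H)) (hne : F.Nonempty) :
    ∑ e ∈ F, G.liftS H hHher T e * star (G.liftS H hHher T e) = Q (Sum.inl ⟨v, hv⟩) := by
  classical
  set Y : Set (G.quotGraph H hHher).E :=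
    (G.quotGraph H hHher).src ⁻¹' {Sum.inl ⟨v, hv⟩} with hY
  have memY_inl : ∀ x : {e : G.E // G.rng e ∉ H}, Sum.inl x ∈ Y ↔ G.src x.1 = v := by
    intro x
    simp only [hY, Set.mem_preimage, Set.mem_singleton_iff, src_inl]
    exact ⟨fun h => congrArg Subtype.val (Sum.inl.inj h),
      fun h => congrArg Sum.inl (Subtype.ext h)⟩
  have memY_inr : ∀ x : {e : G.E // G.rng e ∈ G.HfinInf H}, Sum.inr x ∈ Y ↔ G.src x.1 = v := by
    intro x
    simp only [hY, Set.mem_preimage, Set.mem_singleton_iff, src_inr]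
    exact ⟨fun h => congrArg Subtype.val (Sum.inl.inj h),
      fun h => congrArg Sum.inl (Subtype.ext h)⟩
  have hYfin : Y.Finite := by
    have h1 : Y ⊆ (Sum.inl '' (Subtype.val ⁻¹' (F : Set G.E)))
        ∪ (Sum.inr '' (Subtype.val ⁻¹' (F : Set G.E))) := by
      intro g hg
      cases g with
      | inl x =>
        exact Or.inl ⟨x, by
          rw [Set.mem_preimage, Finset.mem_coe, hF]
          exact ⟨(memY_inl x).mp hg, x.2⟩, rfl⟩
      | inr x =>
        exact Or.inr ⟨x, by
          rw [Set.mem_preimage, Finset.mem_coe, hF]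
          exact ⟨(memY_inr x).mp hg, x.2.1⟩, rfl⟩
    exact Set.Finite.subset (Set.Finite.union
      (Set.Finite.image _ (Set.Finite.preimage Subtype.val_injective.injOn F.finite_toSet))
      (Set.Finite.image _ (Set.Finite.preimage Subtype.val_injective.injOn F.finite_toSet))) h1
  have hYne : Y.Nonempty := by
    obtain ⟨e, heF⟩ := hne
    obtain ⟨hse, hre⟩ := (hF e).mp heF
    exact ⟨Sum.inl ⟨e, hre⟩, (memY_inl _).mpr hse⟩
  have hck3 := hCK.ck3 (Sum.inl ⟨v, hv⟩) hYfin hYne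
  erw [← hY, ← Set.Finite.coe_toFinset hYfin, finsum_mem_coe_finset] at hck3
  set φ : (G.quotGraph H hHher).E → G.E := Sum.elim Subtype.val Subtype.val with hφ
  have hmaps : ∀ g ∈ hYfin.toFinset, φ g ∈ F := by
    intro g hg
    rw [Set.Finite.mem_toFinset] at hg
    cases g with
    | inl x => rw [hφ, Sum.elim_inl, hF]; exact ⟨(memY_inl x).mp hg, x.2⟩
    | inr x => rw [hφ, Sum.elim_inr, hF]; exact ⟨(memY_inr x).mp hg, x.2.1⟩
  rw [hck3, ← Finset.sum_fiberwise_of_maps_to hmaps (fun g => T g * star (T g))]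
  refine Finset.sum_congr rfl ?_
  intro e heF
  obtain ⟨hse, hre⟩ := (hF e).mp heF
  by_cases hfe : G.rng e ∈ G.HfinInf H
  · have hfil : hYfin.toFinset.filter (fun g => φ g = e)
        = {Sum.inl ⟨e, hre⟩, Sum.inr ⟨e, hfe⟩} := by
      ext g
      cases g with
      | inl x =>
        erw [Finset.mem_filter, Set.Finite.mem_toFinset, memY_inl, Finset.mem_insert, Finset.mem_singleton]
        simp only [Finset.mem_filter, Set.Finite.mem_toFinset, memY_inl, hφ, Sum.elim_inl,
          Finset.mem_insert, Finset.mem_singleton, Sum.inl.injEq, Subtype.mk.injEq,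
          reduceCtorEq, or_false, Subtype.ext_iff]
        constructor
        · rintro ⟨_, h⟩; exact congrArg Sum.inl (Subtype.ext h)
        · intro h
          have hx : x.1 = e := congrArg Subtype.val (Sum.inl.inj h)
          exact ⟨by rw [hx, hse], hx⟩
      | inr x =>
        erw [Finset.mem_filter, Set.Finite.mem_toFinset, memY_inr, Finset.mem_insert, Finset.mem_singleton]
        simp only [Finset.mem_filter, Set.Finite.mem_toFinset, memY_inr, hφ, Sum.elim_inr,
          Finset.mem_insert, Finset.mem_singleton, reduceCtorEq, false_or]
        constructor
        · rintro ⟨_, h⟩; exact congrArg Sum.inr (Subtype.ext h)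
        · intro h
          have hx : x.1 = e := congrArg Subtype.val (Sum.inr.inj h)
          exact ⟨by rw [hx, hse], hx⟩
    erw [hfil, Finset.sum_insert (Finset.notMem_singleton.mpr (by intro h; cases h)), Finset.sum_singleton, SSstar_fin hHher hCK hre hfe]
  · have hfil : hYfin.toFinset.filter (fun g => φ g = e) = {Sum.inl ⟨e, hre⟩} := by
      ext g
      cases g with
      | inl x =>
        erw [Finset.mem_filter, Set.Finite.mem_toFinset, memY_inl, Finset.mem_singleton]
        simp only [Finset.mem_filter, Set.Finite.mem_toFinset, memY_inl, hφ, Sum.elim_inl,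
          Finset.mem_singleton, Sum.inl.injEq, Subtype.mk.injEq, Subtype.ext_iff]
        constructor
        · rintro ⟨_, h⟩; exact congrArg Sum.inl (Subtype.ext h)
        · intro h
          have hx : x.1 = e := congrArg Subtype.val (Sum.inl.inj h)
          exact ⟨by rw [hx, hse], hx⟩
      | inr x =>
        erw [Finset.mem_filter, Set.Finite.mem_toFinset, memY_inr, Finset.mem_singleton]
        simp only [Finset.mem_filter, Set.Finite.mem_toFinset, memY_inr, hφ, Sum.elim_inr,
          Finset.mem_singleton, reduceCtorEq, iff_false, not_and]
        intro _ h
        exact absurd (h ▸ x.2) hfe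
    erw [hfil, Finset.sum_singleton, liftS_not hHher hre hfe]

end Digraph'
end LiftLemmas

/-- If `{T, Q}` is a Cuntz-Krieger `(E/H)`-family, then `{S, P}` as
defined above is a Cuntz-Krieger `E`-family with `P v = 0` for `v ∈ H`; moreover, for
`v ∈ H^fin_∞` one has `P_{v,H} = Q_v`, so that `P_v − P_{v,H} = Q_{β(v)}`. -/
theorem stmt_16 (G : Digraph') [Countable G.V] [Countable G.E]
    {A : Type*} [NonUnitalCStarAlgebra A] [PartialOrder A] [StarOrderedRing A]
    (H : Set G.V) (hHsat : G.Saturated H) (hHher : G.Hereditary H)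
    (Q : (G.quotGraph H hHher).V → A) (T : (G.quotGraph H hHher).E → A)
    (hCK : (G.quotGraph H hHher).IsCKFamily Q T) :
    G.IsCKFamily (G.liftP H hHher Q) (G.liftS H hHher T) ∧
    (∀ v ∈ H, G.liftP H hHher Q v = 0) ∧
    (∀ v : G.V, ∀ hv : v ∈ G.HfinInf H,
      G.pvH (G.liftS H hHher T) H v = Q (Sum.inl ⟨v, hv.1⟩) ∧
      G.liftP H hHher Q v - G.pvH (G.liftS H hHher T) H v = Q (Sum.inr ⟨v, hv⟩)) := by
  classical
  refine ⟨?_, fun v hv => Digraph'.liftP_mem hHher hv, ?_⟩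
  · refine ⟨Digraph'.liftP_star hHher hCK, Digraph'.liftP_idem hHher hCK,
      fun v w hvw => Digraph'.liftP_orth hHher hCK hvw,
      fun e f hef => Digraph'.range_orth_lift hHher hCK hef,
      Digraph'.ck1_lift hHher hCK, Digraph'.ck2_lift hHher hCK, ?_⟩
    intro v hfin hne
    by_cases hv : v ∈ H
    · rw [Digraph'.liftP_mem hHher hv, ← Set.Finite.coe_toFinset hfin, finsum_mem_coe_finset]
      symm
      apply Finset.sum_eq_zero
      intro e he
      rw [Set.Finite.mem_toFinset, Set.mem_preimage, Set.mem_singleton_iff] at he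
      have hre : G.rng e ∈ H :=
        hHher (show G.src e ∈ H by rw [he]; exact hv)
          (Relation.ReflTransGen.single ⟨e, rfl, rfl⟩)
      rw [Digraph'.liftS_mem hHher hre]
      simp
    · have hnf : v ∉ G.HfinInf H := fun hm => hm.2.1 hfin
      rw [Digraph'.liftP_not hHher hv hnf, ← Set.Finite.coe_toFinset hfin,
        finsum_mem_coe_finset]
      have hzero : ∀ e ∈ hfin.toFinset,
          G.liftS H hHher T e * star (G.liftS H hHher T e) ≠ 0 → G.rng e ∉ H := by
        intro e _ hne0 hreH
        exact hne0 (by rw [Digraph'.liftS_mem hHher hreH]; simp)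
      rw [← Finset.sum_filter_of_ne hzero]
      set F := hfin.toFinset.filter (fun e => G.rng e ∉ H) with hFdef
      have hF : ∀ e, e ∈ F ↔ (G.src e = v ∧ G.rng e ∉ H) := by
        intro e
        simp [hFdef, Finset.mem_filter, Set.Finite.mem_toFinset]
      have hFne : F.Nonempty := by
        rw [Finset.nonempty_iff_ne_empty]
        intro hFe
        apply hv
        refine hHsat v hfin hne ?_
        intro e hse
        by_contra hre
        have hmem : e ∈ F := (hF e).mpr ⟨hse, hre⟩
        rw [hFe] at hmem
        exact absurd hmem (Finset.notMem_empty e)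
      exact (Digraph'.key_sum hHher hCK v hv F hF hFne).symm
  · intro v hv
    have h1 : G.pvH (G.liftS H hHher T) H v = Q (Sum.inl ⟨v, hv.1⟩) := by
      rw [Digraph'.pvH, finsum_mem_eq_finite_toFinset_sum _ hv.2.2.1]
      refine Digraph'.key_sum hHher hCK v hv.1 _ ?_ ?_
      · intro e
        simp [Set.Finite.mem_toFinset]
      · exact (Set.Finite.toFinset_nonempty _).mpr hv.2.2.2
    refine ⟨h1, ?_⟩
    rw [h1, Digraph'.liftP_fin hHher hv.1 hv]
    exact add_sub_cancel_left _ _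
end
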